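/- Strong convergence of √ρ_ε u_ε in three dimensions: assume α and γ satisfy the conditions of the three-dimensional existence theorem (α ∈ [3/4, 2), γ ∈ (1,3), and γ ∈ (1, 6α−3) if α ∈ [3/4, 1], γ ∈ [2α−1, 3α−1] if α ∈ (1,2)). Under the uniform energy, BD entropy and Mellet–Vasseur bounds, along a subsequence ε_n → 0⁺ one has √ρ_{ε_n} u_{ε_n} → √ρ u strongly in L²(Ω × (0,T)), and moreover √ρ u ∈ L^∞(0,T; L²(Ω)), where ρ is the a.e. limit of the densities and u is the limit velocity obtained from the compactness of the momenta (u = 0 on the vacuum set {ρ = 0}). -/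

import Mathlib

set_option maxHeartbeats 1000000


open MeasureTheory Real Filter Topology
open scoped ENNReal

noncomputable section

/-- Partial derivative of a scalar field in the `i`-th coordinate direction. -/
def pd {n : ℕ} (f : (Fin n → ℝ) → ℝ) (x : Fin n → ℝ) (i : Fin n) : ℝ :=
  fderiv ℝ f x (Pi.single i 1)

/-- Squared Euclidean norm of a vector in `ℝⁿ`. -/
def nsq {n : ℕ} (v : Fin n → ℝ) : ℝ := ∑ i, v i ^ 2

/-- `|∇f|²`, the squared norm of the spatial gradient of a scalar field. -/
def gradSq {n : ℕ} (f : (Fin n → ℝ) → ℝ) (x : Fin n → ℝ) : ℝ := ∑ i, pd f x i ^ 2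

/-- Divergence of a vector field. -/
def vdiv {n : ℕ} (w : (Fin n → ℝ) → Fin n → ℝ) (x : Fin n → ℝ) : ℝ :=
  ∑ i, pd (fun y => w y i) x i

/-- `|∇u|²`, the squared Frobenius norm of the velocity gradient. -/
def gradVecSq {n : ℕ} (w : (Fin n → ℝ) → Fin n → ℝ) (x : Fin n → ℝ) : ℝ :=
  ∑ i, ∑ j, pd (fun y => w y j) x i ^ 2

/-- `|𝒟u|²`, where `𝒟u = (∇u + (∇u)ᵀ)/2` is the symmetric gradient. -/
def symGradSq {n : ℕ} (w : (Fin n → ℝ) → Fin n → ℝ) (x : Fin n → ℝ) : ℝ :=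
  ∑ i, ∑ j, ((pd (fun y => w y j) x i + pd (fun y => w y i) x j) / 2) ^ 2

/-- Fundamental domain of the torus `𝕋ⁿ = ℝⁿ/ℤⁿ`. -/
def Q (n : ℕ) : Set (Fin n → ℝ) := Set.univ.pi fun _ => Set.Ico (0 : ℝ) 1

/-- Periodicity with period `1` in each coordinate direction. -/
def ZPeriodic {n : ℕ} {E : Type*} (f : (Fin n → ℝ) → E) : Prop :=
  ∀ (x : Fin n → ℝ) (i : Fin n), f (x + Pi.single i 1) = f x

/-- The regularized viscosity coefficient `h_ε(r) = r^α + ε^{1/3}(r^{7/8} + r^{γ̃})`. -/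
def hvis (ε α γt r : ℝ) : ℝ := r ^ α + ε ^ ((1:ℝ)/3) * (r ^ ((7:ℝ)/8) + r ^ γt)

/-- The derivative `h_ε'`. -/
def hvisD (ε α γt r : ℝ) : ℝ :=
  α * r ^ (α - 1) + ε ^ ((1:ℝ)/3) * ((7:ℝ)/8 * r ^ (-(1:ℝ)/8) + γt * r ^ (γt - 1))

/-- `g_ε(ρ) = ρ h_ε'(ρ) - h_ε(ρ)`. -/
def gvis (ε α γt r : ℝ) : ℝ := r * hvisD ε α γt r - hvis ε α γt r

/-- `ε₀ = min{(2α-1)(16(α+γ))⁻¹⁰, η₀}`. -/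
def eps0 (α γ η₀ : ℝ) : ℝ := min ((2 * α - 1) * (16 * (α + γ)) ^ (-(10:ℝ))) η₀

/-- The regularized continuity equation
`ρ_t + div(ρ u) = ε ρ^{1/2} div(ρ^{-1/2} h_ε'(ρ) ∇ρ)` at `(t, x)`. -/
def ContEq (n : ℕ) (ε α γt : ℝ) (ρ : ℝ → (Fin n → ℝ) → ℝ)
    (u : ℝ → (Fin n → ℝ) → Fin n → ℝ) (t : ℝ) (x : Fin n → ℝ) : Prop :=
  deriv (fun s => ρ s x) t + vdiv (fun y i => ρ t y * u t y i) x
    = ε * ρ t x ^ ((1:ℝ)/2) *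
        vdiv (fun y i => ρ t y ^ (-(1:ℝ)/2) * hvisD ε α γt (ρ t y) * pd (ρ t) y i) x

/-- The regularized momentum equation in the `𝒟u` form, with the extra `√ε`
viscosity and the damping term, `j`-th component at `(t, x)`:
`ρ u_t + ρ u·∇u − div(h_ε(ρ)𝒟u) − ∇(g_ε(ρ) div u) + ∇(ρ^γ)
  = √ε div(h_ε(ρ)∇u) + √ε ∇(g_ε(ρ) div u) − e^{−ε^{−3}}(ρ^{ε^{−2}} + ρ^{−ε^{−2}}) u`. -/
def MomEqD (n : ℕ) (ε α γ γt : ℝ) (ρ : ℝ → (Fin n → ℝ) → ℝ)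
    (u : ℝ → (Fin n → ℝ) → Fin n → ℝ) (t : ℝ) (x : Fin n → ℝ) (j : Fin n) : Prop :=
  ρ t x * deriv (fun s => u s x j) t
      + ρ t x * (∑ i, u t x i * pd (fun y => u t y j) x i)
      - (∑ i, pd (fun y => hvis ε α γt (ρ t y) *
          ((pd (fun z => u t z j) y i + pd (fun z => u t z i) y j) / 2)) x i)
      - pd (fun y => gvis ε α γt (ρ t y) * vdiv (u t) y) x j
      + pd (fun y => ρ t y ^ γ) x j
    = Real.sqrt ε *
          (∑ i, pd (fun y => hvis ε α γt (ρ t y) * pd (fun z => u t z j) y i) x i)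
        + Real.sqrt ε * pd (fun y => gvis ε α γt (ρ t y) * vdiv (u t) y) x j
        - Real.exp (-ε ^ (-(3:ℝ))) *
            (ρ t x ^ (ε ^ (-(2:ℝ))) + ρ t x ^ (-(ε ^ (-(2:ℝ))))) * u t x j

/-- The regularized momentum equation in the `∇u` form (no `√ε` terms),
`j`-th component at `(t, x)`:
`ρ u_t + ρ u·∇u − div(h_ε(ρ)∇u) − ∇(g_ε(ρ) div u) + ∇(ρ^γ)
  = − e^{−ε^{−3}}(ρ^{ε^{−2}} + ρ^{−ε^{−2}}) u`. -/
def MomEqN (n : ℕ) (ε α γ γt : ℝ) (ρ : ℝ → (Fin n → ℝ) → ℝ)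
    (u : ℝ → (Fin n → ℝ) → Fin n → ℝ) (t : ℝ) (x : Fin n → ℝ) (j : Fin n) : Prop :=
  ρ t x * deriv (fun s => u s x j) t
      + ρ t x * (∑ i, u t x i * pd (fun y => u t y j) x i)
      - (∑ i, pd (fun y => hvis ε α γt (ρ t y) * pd (fun z => u t z j) y i) x i)
      - pd (fun y => gvis ε α γt (ρ t y) * vdiv (u t) y) x j
      + pd (fun y => ρ t y ^ γ) x j
    = -(Real.exp (-ε ^ (-(3:ℝ))) *
          (ρ t x ^ (ε ^ (-(2:ℝ))) + ρ t x ^ (-(ε ^ (-(2:ℝ))))) * u t x j)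

/-- The `ε`-uniform bounds on the smooth approximate initial density. -/
def InitBound (n : ℕ) (ε α γ γt C₀ : ℝ) (ρ₀ : (Fin n → ℝ) → ℝ) : Prop :=
  (∫ x in Q n, ρ₀ x) + (∫ x in Q n, ρ₀ x ^ γ) ^ (1/γ)
      + (∫ x in Q n, gradSq (fun y => ρ₀ y ^ (α - 1/2)) x) ^ ((1:ℝ)/2)
      + ε ^ ((1:ℝ)/3) * (∫ x in Q n, gradSq (fun y => ρ₀ y ^ ((3:ℝ)/8)) x) ^ ((1:ℝ)/2)
      + ε ^ ((1:ℝ)/3) * (∫ x in Q n, gradSq (fun y => ρ₀ y ^ (γ - 1/3)) x) ^ ((1:ℝ)/2)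
      + ε ^ ((13:ℝ)/3) * Real.exp (-ε ^ (-(3:ℝ))) *
          ((∫ x in Q n, ρ₀ x ^ (ε ^ (-(2:ℝ)) + γt - 1))
            + (∫ x in Q n, ρ₀ x ^ (-(ε ^ (-(2:ℝ))) - 1/8)))
      + ε ^ (4:ℝ) * Real.exp (-ε ^ (-(3:ℝ))) *
          ((∫ x in Q n, ρ₀ x ^ (ε ^ (-(2:ℝ)) + α - 1))
            + (∫ x in Q n, ρ₀ x ^ (-(ε ^ (-(2:ℝ))) + α - 1)))
    ≤ C₀

/-- The uniform (in `ε` and `T`) energy bound. -/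
def EnergyBd (n : ℕ) (ε α γ γt T C : ℝ) (ρ : ℝ → (Fin n → ℝ) → ℝ)
    (u : ℝ → (Fin n → ℝ) → Fin n → ℝ) : Prop :=
  ∀ t ∈ Set.Icc (0:ℝ) T,
    (∫ x in Q n, (ρ t x * nsq (u t x) + ρ t x + ρ t x ^ γ))
        + (∫ s in (0:ℝ)..T, ∫ x in Q n, hvis ε α γt (ρ s x) * gradVecSq (u s) x)
        + ε * (∫ s in (0:ℝ)..T, ∫ x in Q n,
            (ρ s x)⁻¹ * hvisD ε α γt (ρ s x) * gradSq (ρ s) x * (1 + nsq (u s x)))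
        + Real.exp (-ε ^ (-(3:ℝ))) * (∫ s in (0:ℝ)..T, ∫ x in Q n,
            (ρ s x ^ (ε ^ (-(2:ℝ))) + ρ s x ^ (-(ε ^ (-(2:ℝ))))) * nsq (u s x))
      ≤ C

/-- The simple uniform energy bound. -/
def EnergyBdS (n : ℕ) (ε α γ γt T C : ℝ) (ρ : ℝ → (Fin n → ℝ) → ℝ)
    (u : ℝ → (Fin n → ℝ) → Fin n → ℝ) : Prop :=
  ∀ t ∈ Set.Icc (0:ℝ) T,
    (∫ x in Q n, (ρ t x * nsq (u t x) + ρ t x + ρ t x ^ γ))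
        + (∫ s in (0:ℝ)..T, ∫ x in Q n, hvis ε α γt (ρ s x) * gradVecSq (u s) x)
      ≤ C

/-- The uniform (in `ε` and `T`) BD entropy bound. -/
def BDBd (n : ℕ) (ε α γ γt T C : ℝ) (ρ : ℝ → (Fin n → ℝ) → ℝ) : Prop :=
  ∀ t ∈ Set.Icc (0:ℝ) T,
    (∫ x in Q n, (ρ t x)⁻¹ * hvisD ε α γt (ρ t x) ^ 2 * gradSq (ρ t) x)
        + (∫ s in (0:ℝ)..T, ∫ x in Q n, ρ s x ^ (α + γ - 3) * gradSq (ρ s) x)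
        + ε ^ ((13:ℝ)/3) * Real.exp (-ε ^ (-(3:ℝ))) *
            (∫ x in Q n, (ρ t x ^ (ε ^ (-(2:ℝ)) + γt - 1) + ρ t x ^ (-(ε ^ (-(2:ℝ))) - 1/8)))
      ≤ C

/-- The uniform `L⁴` bound on the velocity. -/
def L4Bd (n : ℕ) (ε α γ γt T C : ℝ) (ρ : ℝ → (Fin n → ℝ) → ℝ)
    (u : ℝ → (Fin n → ℝ) → Fin n → ℝ) : Prop :=
  ∀ t ∈ Set.Icc (0:ℝ) T,
    (∫ x in Q n, ρ t x * nsq (u t x) ^ 2)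
        + (∫ s in (0:ℝ)..T, ∫ x in Q n,
            hvis ε α γt (ρ s x) * nsq (u s x) * gradVecSq (u s) x)
      ≤ C


/-- truncation of a vector at norm `M` -/
def trv (M : ℝ) (v : Fin 3 → ℝ) : Fin 3 → ℝ := fun i => (M / max M (Real.sqrt (nsq v))) * v i

def Phi (v : Fin 3 → ℝ) : ℝ := (Real.exp 1 + nsq v) * Real.log (Real.exp 1 + nsq v)

lemma nsq_nonneg {n : ℕ} (v : Fin n → ℝ) : 0 ≤ nsq v :=
  Finset.sum_nonneg fun i _ => sq_nonneg _

lemma nsq_smul {n : ℕ} (a : ℝ) (v : Fin n → ℝ) : nsq (fun i => a * v i) = a ^ 2 * nsq v := by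
  simp [nsq, Finset.mul_sum, mul_pow]

lemma one_le_e : (1:ℝ) ≤ Real.exp 1 := Real.one_le_exp zero_le_one

lemma Phi_nonneg (v : Fin 3 → ℝ) : 0 ≤ Phi v := by
  have h1 : (1:ℝ) ≤ Real.exp 1 + nsq v := by
    have := nsq_nonneg v; linarith [one_le_e]
  exact mul_nonneg (by linarith) (Real.log_nonneg h1)

lemma logM_pos (M : ℝ) : 0 < Real.log (Real.exp 1 + M ^ 2) := by
  have h1 : (1:ℝ) < Real.exp 1 + M ^ 2 := by
    have := Real.add_one_le_exp (1:ℝ)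
    nlinarith [sq_nonneg M]
  exact Real.log_pos h1

lemma trv_factor_mem (M : ℝ) (hM : 0 < M) (v : Fin 3 → ℝ) :
    0 ≤ M / max M (Real.sqrt (nsq v)) ∧ M / max M (Real.sqrt (nsq v)) ≤ 1 := by
  have hden : 0 < max M (Real.sqrt (nsq v)) := lt_max_of_lt_left hM
  constructor
  · positivity
  · rw [div_le_one hden]; exact le_max_left _ _

lemma nsq_trv_le (M : ℝ) (hM : 0 < M) (v : Fin 3 → ℝ) : nsq (trv M v) ≤ M ^ 2 := by
  have hden : 0 < max M (Real.sqrt (nsq v)) := lt_max_of_lt_left hM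
  rw [show trv M v = fun i => (M / max M (Real.sqrt (nsq v))) * v i from rfl, nsq_smul]
  rcases le_total (Real.sqrt (nsq v)) M with h | h
  · rw [max_eq_left h, div_self hM.ne']
    have := Real.sq_sqrt (nsq_nonneg v)
    nlinarith [Real.sqrt_nonneg (nsq v)]
  · rw [max_eq_right h, div_pow]
    have hs : 0 < Real.sqrt (nsq v) := lt_of_lt_of_le hM h
    have hsq : Real.sqrt (nsq v) ^ 2 = nsq v := Real.sq_sqrt (nsq_nonneg v)
    rw [hsq]
    have hnz : nsq v ≠ 0 := by nlinarith
    rw [div_mul_cancel₀ _ hnz]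

lemma nsq_sub_trv (M : ℝ) (hM : 0 < M) (v : Fin 3 → ℝ) :
    nsq (fun i => v i - trv M v i) ≤ nsq v := by
  have hmem := trv_factor_mem M hM v
  set c := M / max M (Real.sqrt (nsq v)) with hc
  have : (fun i => v i - trv M v i) = fun i => (1 - c) * v i := by
    funext i; simp only [trv, ← hc]; ring
  rw [this, nsq_smul]
  have hc2 : (1 - c) ^ 2 ≤ 1 := by nlinarith [hmem.1, hmem.2]
  nlinarith [nsq_nonneg v, hc2]

lemma trv_eq_self (M : ℝ) (hM : 0 < M) (v : Fin 3 → ℝ) (h : Real.sqrt (nsq v) ≤ M) :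
    trv M v = v := by
  funext i; simp [trv, max_eq_left h, div_self hM.ne']

/-- Lemma A : tail estimate -/
lemma keyA (M r : ℝ) (v : Fin 3 → ℝ) (hr : 0 ≤ r) (hM : 0 < M) :
    r * nsq (fun i => v i - trv M v i) ≤ r * Phi v / Real.log (Real.exp 1 + M ^ 2) := by
  have hL := logM_pos M
  rcases le_total (Real.sqrt (nsq v)) M with h | h
  · rw [trv_eq_self M hM v h]
    simp only [sub_self]
    have : nsq (fun _ : Fin 3 => (0:ℝ)) = 0 := by simp [nsq]
    rw [this, mul_zero]
    exact div_nonneg (mul_nonneg hr (Phi_nonneg v)) hL.le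
  · -- M ≤ |v| : then M^2 ≤ nsq v
    have hM2 : M ^ 2 ≤ nsq v := by
      have := Real.sq_sqrt (nsq_nonneg v)
      nlinarith [Real.sqrt_nonneg (nsq v)]
    have h1 : nsq (fun i => v i - trv M v i) ≤ nsq v := nsq_sub_trv M hM v
    have h2 : nsq v * Real.log (Real.exp 1 + M ^ 2) ≤ Phi v := by
      have hlog : Real.log (Real.exp 1 + M ^ 2) ≤ Real.log (Real.exp 1 + nsq v) :=
        Real.log_le_log (by positivity) (by linarith)
      have hv : nsq v ≤ Real.exp 1 + nsq v := by
        have := Real.exp_pos (1:ℝ); linarith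
      calc nsq v * Real.log (Real.exp 1 + M ^ 2) ≤ nsq v * Real.log (Real.exp 1 + nsq v) :=
            mul_le_mul_of_nonneg_left hlog (nsq_nonneg v)
        _ ≤ (Real.exp 1 + nsq v) * Real.log (Real.exp 1 + nsq v) := by
            have hl : 0 ≤ Real.log (Real.exp 1 + nsq v) := by
              apply Real.log_nonneg; have := nsq_nonneg v; linarith [one_le_e]
            exact mul_le_mul_of_nonneg_right hv hl
    rw [le_div_iff₀ hL]
    calc r * nsq (fun i => v i - trv M v i) * Real.log (Real.exp 1 + M ^ 2)
        ≤ r * nsq v * Real.log (Real.exp 1 + M ^ 2) := by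
          apply mul_le_mul_of_nonneg_right _ hL.le
          exact mul_le_mul_of_nonneg_left h1 hr
      _ = r * (nsq v * Real.log (Real.exp 1 + M ^ 2)) := by ring
      _ ≤ r * Phi v := mul_le_mul_of_nonneg_left h2 hr

lemma nsq_three (x y z : Fin 3 → ℝ) :
    nsq (fun i => x i + y i + z i) ≤ 3 * (nsq x + nsq y + nsq z) := by
  unfold nsq
  have : ∀ i : Fin 3, (x i + y i + z i) ^ 2 ≤ 3 * (x i ^ 2 + y i ^ 2 + z i ^ 2) := by
    intro i; nlinarith [sq_nonneg (x i - y i), sq_nonneg (x i - z i), sq_nonneg (y i - z i)]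
  calc (∑ i, (x i + y i + z i) ^ 2) ≤ ∑ i, 3 * (x i ^ 2 + y i ^ 2 + z i ^ 2) :=
        Finset.sum_le_sum fun i _ => this i
    _ = 3 * ((∑ i, x i ^ 2) + (∑ i, y i ^ 2) + (∑ i, z i ^ 2)) := by
        rw [← Finset.mul_sum]; congr 1; rw [← Finset.sum_add_distrib, ← Finset.sum_add_distrib]

lemma nsq_two (x y : Fin 3 → ℝ) : nsq (fun i => x i - y i) ≤ 2 * (nsq x + nsq y) := by
  unfold nsq
  have : ∀ i : Fin 3, (x i - y i) ^ 2 ≤ 2 * (x i ^ 2 + y i ^ 2) := by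
    intro i; nlinarith [sq_nonneg (x i + y i)]
  calc (∑ i, (x i - y i) ^ 2) ≤ ∑ i, 2 * (x i ^ 2 + y i ^ 2) :=
        Finset.sum_le_sum fun i _ => this i
    _ = 2 * ((∑ i, x i ^ 2) + (∑ i, y i ^ 2)) := by
        rw [← Finset.mul_sum]; congr 1; rw [← Finset.sum_add_distrib]

/-- Lemma B : main pointwise decomposition -/
lemma keyB (M r r' : ℝ) (v w : Fin 3 → ℝ) (hr : 0 ≤ r) (hr' : 0 ≤ r') (hM : 0 < M) :
    nsq (fun i => Real.sqrt r * v i - Real.sqrt r' * w i) ≤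
      3 * nsq (fun i => Real.sqrt r * trv M v i - Real.sqrt r' * trv M w i)
      + 3 / Real.log (Real.exp 1 + M ^ 2) * (r * Phi v)
      + 3 / Real.log (Real.exp 1 + M ^ 2) * (r' * Phi w) := by
  have hL := logM_pos M
  set m : Fin 3 → ℝ := fun i => Real.sqrt r * trv M v i - Real.sqrt r' * trv M w i with hm
  set p : Fin 3 → ℝ := fun i => Real.sqrt r * (v i - trv M v i) with hp
  set q : Fin 3 → ℝ := fun i => - (Real.sqrt r' * (w i - trv M w i)) with hq
  have hdec : (fun i => Real.sqrt r * v i - Real.sqrt r' * w i) = fun i => m i + p i + q i := by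
    funext i; simp only [hm, hp, hq]; ring
  have h3 : nsq (fun i => m i + p i + q i) ≤ 3 * (nsq m + nsq p + nsq q) := nsq_three m p q
  have hbp : nsq p ≤ r * Phi v / Real.log (Real.exp 1 + M ^ 2) := by
    have : nsq p = r * nsq (fun i => v i - trv M v i) := by
      rw [hp, nsq_smul, Real.sq_sqrt hr]
    rw [this]; exact keyA M r v hr hM
  have hbq : nsq q ≤ r' * Phi w / Real.log (Real.exp 1 + M ^ 2) := by
    have : nsq q = r' * nsq (fun i => w i - trv M w i) := by
      rw [hq]
      have : (fun i => -(Real.sqrt r' * (w i - trv M w i))) =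
          fun i => (- Real.sqrt r') * (w i - trv M w i) := by funext i; ring
      rw [this, nsq_smul, neg_pow, Real.sq_sqrt hr']; ring
    rw [this]; exact keyA M r' w hr' hM
  rw [hdec]
  calc nsq (fun i => m i + p i + q i) ≤ 3 * (nsq m + nsq p + nsq q) := h3
    _ ≤ 3 * nsq m + 3 / Real.log (Real.exp 1 + M ^ 2) * (r * Phi v)
        + 3 / Real.log (Real.exp 1 + M ^ 2) * (r' * Phi w) := by
        have e1 : 3 / Real.log (Real.exp 1 + M ^ 2) * (r * Phi v)
            = 3 * (r * Phi v / Real.log (Real.exp 1 + M ^ 2)) := by ring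
        have e2 : 3 / Real.log (Real.exp 1 + M ^ 2) * (r' * Phi w)
            = 3 * (r' * Phi w / Real.log (Real.exp 1 + M ^ 2)) := by ring
        rw [e1, e2]; nlinarith [hbp, hbq]

/-- Lemma C : domination of the truncated part -/
lemma keyC (M r r' : ℝ) (v w : Fin 3 → ℝ) (hr : 0 ≤ r) (hr' : 0 ≤ r') (hM : 0 < M) :
    nsq (fun i => Real.sqrt r * trv M v i - Real.sqrt r' * trv M w i) ≤
      2 * M ^ 2 * r + 2 * M ^ 2 * r' := by
  have h2 := nsq_two (fun i => Real.sqrt r * trv M v i) (fun i => Real.sqrt r' * trv M w i)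
  have hv : nsq (fun i => Real.sqrt r * trv M v i) ≤ r * M ^ 2 := by
    rw [nsq_smul, Real.sq_sqrt hr]
    exact mul_le_mul_of_nonneg_left (nsq_trv_le M hM v) hr
  have hw : nsq (fun i => Real.sqrt r' * trv M w i) ≤ r' * M ^ 2 := by
    rw [nsq_smul, Real.sq_sqrt hr']
    exact mul_le_mul_of_nonneg_left (nsq_trv_le M hM w) hr'
  nlinarith

/-- continuity of the truncation -/
lemma continuous_nsq {n : ℕ} : Continuous fun v : Fin n → ℝ => nsq v := by
  unfold nsq; exact continuous_finset_sum _ fun i _ => (continuous_apply i).pow 2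

lemma continuous_trv (M : ℝ) (hM : 0 < M) : Continuous fun v : Fin 3 → ℝ => trv M v := by
  apply continuous_pi
  intro i
  apply Continuous.mul _ (continuous_apply i)
  apply Continuous.div continuous_const
  · exact continuous_const.max (Real.continuous_sqrt.comp continuous_nsq)
  · intro v
    have : 0 < max M (Real.sqrt (nsq v)) := lt_max_of_lt_left hM
    exact this.ne'

lemma continuous_Phi : Continuous Phi := by
  have h1 : Continuous fun v : Fin 3 → ℝ => Real.exp 1 + nsq v :=
    continuous_const.add continuous_nsq
  have h2 : Continuous fun v : Fin 3 → ℝ => Real.log (Real.exp 1 + nsq v) := by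
    rw [continuous_iff_continuousAt]
    intro v
    have hpos : (0:ℝ) < Real.exp 1 + nsq v := by
      have := nsq_nonneg v; have := Real.exp_pos (1:ℝ); linarith
    exact ContinuousAt.comp (g := Real.log) (Real.continuousAt_log hpos.ne') h1.continuousAt
  exact h1.mul h2


section MeasAux

variable {X Y : Type*} [MeasurableSpace X] [MeasurableSpace Y]
variable (μ : Measure X) (ν : Measure Y) [SFinite ν]

lemma I2_add {f g : X × Y → ℝ≥0∞} (hf : Measurable f) (hg : Measurable g) :
    (∫⁻ x, ∫⁻ y, (f (x, y) + g (x, y)) ∂ν ∂μ) =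
      (∫⁻ x, ∫⁻ y, f (x, y) ∂ν ∂μ) + ∫⁻ x, ∫⁻ y, g (x, y) ∂ν ∂μ := by
  have h1 : ∀ x, (∫⁻ y, (f (x, y) + g (x, y)) ∂ν)
      = (∫⁻ y, f (x, y) ∂ν) + ∫⁻ y, g (x, y) ∂ν := by
    intro x
    exact lintegral_add_left (hf.comp measurable_prodMk_left) _
  simp_rw [h1]
  exact lintegral_add_left hf.lintegral_prod_right' _

lemma I2_cmul {f : X × Y → ℝ≥0∞} (hf : Measurable f) (c : ℝ≥0∞) :
    (∫⁻ x, ∫⁻ y, (c * f (x, y)) ∂ν ∂μ) = c * ∫⁻ x, ∫⁻ y, f (x, y) ∂ν ∂μ := by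
  have h1 : ∀ x, (∫⁻ y, (c * f (x, y)) ∂ν) = c * ∫⁻ y, f (x, y) ∂ν := fun x =>
    lintegral_const_mul c (hf.comp measurable_prodMk_left)
  simp_rw [h1]
  exact lintegral_const_mul c hf.lintegral_prod_right'

lemma I2_mono_ae {f g : X × Y → ℝ≥0∞}
    (h : ∀ᵐ x ∂μ, ∀ᵐ y ∂ν, f (x, y) ≤ g (x, y)) :
    (∫⁻ x, ∫⁻ y, f (x, y) ∂ν ∂μ) ≤ ∫⁻ x, ∫⁻ y, g (x, y) ∂ν ∂μ :=
  lintegral_mono_ae (h.mono fun _ hx => lintegral_mono_ae hx)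

/-- iterated Fatou -/
lemma I2_liminf_le {f : ℕ → X × Y → ℝ≥0∞} (hf : ∀ k, Measurable (f k)) :
    (∫⁻ x, ∫⁻ y, liminf (fun k => f k (x, y)) atTop ∂ν ∂μ) ≤
      liminf (fun k => ∫⁻ x, ∫⁻ y, f k (x, y) ∂ν ∂μ) atTop := by
  calc (∫⁻ x, ∫⁻ y, liminf (fun k => f k (x, y)) atTop ∂ν ∂μ)
      ≤ ∫⁻ x, liminf (fun k => ∫⁻ y, f k (x, y) ∂ν) atTop ∂μ := by
        apply lintegral_mono fun x => ?_
        exact lintegral_liminf_le fun k => (hf k).comp measurable_prodMk_left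
    _ ≤ liminf (fun k => ∫⁻ x, ∫⁻ y, f k (x, y) ∂ν ∂μ) atTop :=
        lintegral_liminf_le fun k => (hf k).lintegral_prod_right'

/-- generalized dominated convergence for iterated lower integrals:
if `h k ≤ r k + q` with `∫∫ r k → 0`, `∫∫ q < ∞`, and `h k → 0` pointwise a.e.,
then `∫∫ h k → 0`. -/
lemma I2_tendsto_zero {h r : ℕ → X × Y → ℝ≥0∞} {q : X × Y → ℝ≥0∞}
    (hh : ∀ k, Measurable (h k)) (hr : ∀ k, Measurable (r k)) (hq : Measurable q)
    (hqfin : (∫⁻ x, ∫⁻ y, q (x, y) ∂ν ∂μ) ≠ ∞)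
    (hbound : ∀ k, ∀ᵐ x ∂μ, ∀ᵐ y ∂ν, h k (x, y) ≤ r k (x, y) + q (x, y))
    (hr0 : Tendsto (fun k => ∫⁻ x, ∫⁻ y, r k (x, y) ∂ν ∂μ) atTop (𝓝 0))
    (hae : ∀ᵐ x ∂μ, ∀ᵐ y ∂ν, Tendsto (fun k => h k (x, y)) atTop (𝓝 0)) :
    Tendsto (fun k => ∫⁻ x, ∫⁻ y, h k (x, y) ∂ν ∂μ) atTop (𝓝 0) := by
  have hsplit : ∀ k, ∀ᵐ x ∂μ, ∀ᵐ y ∂ν,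
      h k (x, y) ≤ min (h k (x, y)) (q (x, y)) + r k (x, y) := by
    intro k
    refine (hbound k).mono fun x hx => hx.mono fun y hxy => ?_
    rcases le_total (h k (x, y)) (q (x, y)) with hc | hc
    · rw [min_eq_left hc]; exact le_add_right le_rfl
    · rw [min_eq_right hc]; rw [add_comm]; exact hxy
  have hmin : Tendsto (fun k => ∫⁻ x, ∫⁻ y, min (h k (x, y)) (q (x, y)) ∂ν ∂μ)
      atTop (𝓝 0) := by
    have hQmeas : Measurable fun x => ∫⁻ y, q (x, y) ∂ν := hq.lintegral_prod_right'
    have hQfin : ∀ᵐ x ∂μ, (∫⁻ y, q (x, y) ∂ν) ≠ ∞ :=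
      (ae_lt_top hQmeas hqfin).mono fun x hx => hx.ne
    have inner : ∀ᵐ x ∂μ,
        Tendsto (fun k => ∫⁻ y, min (h k (x, y)) (q (x, y)) ∂ν) atTop (𝓝 0) := by
      filter_upwards [hae, hQfin] with x hx hfin
      have := tendsto_lintegral_of_dominated_convergence (μ := ν)
        (F := fun k y => min (h k (x, y)) (q (x, y))) (f := fun _ => 0) (fun y => q (x, y))
        (fun k => ((hh k).comp measurable_prodMk_left).min (hq.comp measurable_prodMk_left))
        (fun k => Eventually.of_forall fun y => min_le_right _ _) hfin
        (hx.mono fun y hy =>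
          tendsto_of_tendsto_of_tendsto_of_le_of_le tendsto_const_nhds hy
            (fun k => zero_le) (fun k => min_le_left _ _))
      simpa using this
    have := tendsto_lintegral_of_dominated_convergence (μ := μ)
      (F := fun k x => ∫⁻ y, min (h k (x, y)) (q (x, y)) ∂ν) (f := fun _ => 0)
      (fun x => ∫⁻ y, q (x, y) ∂ν)
      (fun k => Measurable.lintegral_prod_right' ((hh k).min hq))
      (fun k => Eventually.of_forall fun x =>
        lintegral_mono fun y => min_le_right _ _) hqfin inner
    simpa using this
  have hle : ∀ k, (∫⁻ x, ∫⁻ y, h k (x, y) ∂ν ∂μ) ≤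
      (∫⁻ x, ∫⁻ y, min (h k (x, y)) (q (x, y)) ∂ν ∂μ) + ∫⁻ x, ∫⁻ y, r k (x, y) ∂ν ∂μ := by
    intro k
    calc (∫⁻ x, ∫⁻ y, h k (x, y) ∂ν ∂μ)
        ≤ ∫⁻ x, ∫⁻ y, (min (h k (x, y)) (q (x, y)) + r k (x, y)) ∂ν ∂μ :=
          I2_mono_ae μ ν (f := h k) (g := fun p => min (h k p) (q p) + r k p) (hsplit k)
      _ = (∫⁻ x, ∫⁻ y, min (h k (x, y)) (q (x, y)) ∂ν ∂μ) + ∫⁻ x, ∫⁻ y, r k (x, y) ∂ν ∂μ :=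
          I2_add μ ν (f := fun p => min (h k p) (q p)) (g := r k) ((hh k).min hq) (hr k)
  have hsum : Tendsto (fun k =>
      (∫⁻ x, ∫⁻ y, min (h k (x, y)) (q (x, y)) ∂ν ∂μ) + ∫⁻ x, ∫⁻ y, r k (x, y) ∂ν ∂μ)
      atTop (𝓝 0) := by
    have := hmin.add hr0
    simpa using this
  exact tendsto_of_tendsto_of_tendsto_of_le_of_le tendsto_const_nhds hsum
    (fun k => zero_le) hle

/-- representation of the limit of a convergent real sequence via `liminf` in `ℝ≥0∞`. -/
lemma limrep {a : ℕ → ℝ} {L : ℝ} (h : Tendsto a atTop (𝓝 L)) :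
    (liminf (fun k => ENNReal.ofReal (a k)) atTop).toReal
      - (liminf (fun k => ENNReal.ofReal (- a k)) atTop).toReal = L := by
  have h1 : liminf (fun k => ENNReal.ofReal (a k)) atTop = ENNReal.ofReal L :=
    (ENNReal.tendsto_ofReal h).liminf_eq
  have h2 : liminf (fun k => ENNReal.ofReal (- a k)) atTop = ENNReal.ofReal (-L) :=
    (ENNReal.tendsto_ofReal h.neg).liminf_eq
  rw [h1, h2]
  rcases le_total 0 L with hL | hL
  · rw [ENNReal.toReal_ofReal hL, ENNReal.ofReal_of_nonpos (by linarith)]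
    simp
  · rw [ENNReal.ofReal_of_nonpos hL, ENNReal.toReal_ofReal (by linarith)]
    simp

end MeasAux

section Reps
open ENNReal

variable {Z : Type*}

/-- measurable representative of a nonnegative a.e. limit -/
def nnRep (f : ℕ → Z → ℝ) (p : Z) : ℝ :=
  (Filter.liminf (fun k => ENNReal.ofReal (f k p)) Filter.atTop).toReal

/-- measurable representative of a (signed) a.e. limit -/
def sgRep (f : ℕ → Z → ℝ) (p : Z) : ℝ :=
  nnRep f p - nnRep (fun k z => - f k z) p

lemma nnRep_nonneg (f : ℕ → Z → ℝ) (p : Z) : 0 ≤ nnRep f p := ENNReal.toReal_nonneg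

lemma measurable_nnRep [MeasurableSpace Z] {f : ℕ → Z → ℝ} (hf : ∀ k, Measurable (f k)) :
    Measurable (nnRep f) :=
  (Measurable.liminf fun k => (hf k).ennreal_ofReal).ennreal_toReal

lemma measurable_sgRep [MeasurableSpace Z] {f : ℕ → Z → ℝ} (hf : ∀ k, Measurable (f k)) :
    Measurable (sgRep f) :=
  (measurable_nnRep hf).sub (measurable_nnRep fun k => (hf k).neg)

lemma nnRep_eq {f : ℕ → Z → ℝ} {p : Z} {L : ℝ}
    (h : Filter.Tendsto (fun k => f k p) Filter.atTop (nhds L)) (hL : 0 ≤ L) :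
    nnRep f p = L := by
  unfold nnRep
  rw [(ENNReal.tendsto_ofReal h).liminf_eq, ENNReal.toReal_ofReal hL]

lemma sgRep_eq {f : ℕ → Z → ℝ} {p : Z} {L : ℝ}
    (h : Filter.Tendsto (fun k => f k p) Filter.atTop (nhds L)) :
    sgRep f p = L := limrep h

end Reps

/-- **Strong convergence of `√ρ_ε u_ε` in three dimensions** (Lemma 3.7): for
`α ∈ [3/4, 2)`, `γ ∈ (1,3)` with `γ < 6α−3` if `α ≤ 1` and
`2α−1 ≤ γ ≤ 3α−1` if `α > 1`, under the uniform energy, BD entropy and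
Mellet–Vasseur bounds and the compactness of the momenta, along a subsequence
`√ρ_ε u_ε → √ρ u` strongly in `L²(Ω × (0,T))` and `√ρ u ∈ L^∞(0,T; L²(Ω))`. -/
theorem sqrt_momentum_convergence_3d (α γ η₀ T C : ℝ)
    (hα1 : 3/4 ≤ α) (hα2 : α < 2) (hγ1 : 1 < γ) (hγ2 : γ < 3)
    (hγ3 : α ≤ 1 → γ < 6 * α - 3)
    (hγ4 : 1 < α → 2 * α - 1 ≤ γ ∧ γ ≤ 3 * α - 1)
    (hη : 0 < η₀) (hT : 0 < T) (hC : 0 < C)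
    (ρ : ℝ → ℝ → (Fin 3 → ℝ) → ℝ) (u : ℝ → ℝ → (Fin 3 → ℝ) → Fin 3 → ℝ)
    (hsm : ∀ ε ∈ Set.Ioc (0:ℝ) (eps0 α γ η₀),
      ContDiff ℝ (⊤ : ℕ∞) (Function.uncurry (ρ ε)) ∧ ContDiff ℝ (⊤ : ℕ∞) (Function.uncurry (u ε)))
    (hper : ∀ ε ∈ Set.Ioc (0:ℝ) (eps0 α γ η₀),
      (∀ t, ZPeriodic (ρ ε t)) ∧ ∀ t, ZPeriodic (u ε t))
    (hpos : ∀ ε ∈ Set.Ioc (0:ℝ) (eps0 α γ η₀), ∀ t ∈ Set.Icc (0:ℝ) T, ∀ x, 0 < ρ ε t x)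
    (hceq : ∀ ε ∈ Set.Ioc (0:ℝ) (eps0 α γ η₀), ∀ t ∈ Set.Ioc (0:ℝ) T, ∀ x,
      ContEq 3 ε α (γ + 1/6) (ρ ε) (u ε) t x)
    (hmeq : ∀ ε ∈ Set.Ioc (0:ℝ) (eps0 α γ η₀), ∀ t ∈ Set.Ioc (0:ℝ) T, ∀ x, ∀ j,
      MomEqN 3 ε α γ (γ + 1/6) (ρ ε) (u ε) t x j)
    (hen : ∀ ε ∈ Set.Ioc (0:ℝ) (eps0 α γ η₀), EnergyBdS 3 ε α γ (γ + 1/6) T C (ρ ε) (u ε))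
    (hbd : ∀ ε ∈ Set.Ioc (0:ℝ) (eps0 α γ η₀), BDBd 3 ε α γ (γ + 1/6) T C (ρ ε))
    (hmv : ∀ ε ∈ Set.Ioc (0:ℝ) (eps0 α γ η₀), ∀ t ∈ Set.Icc (0:ℝ) T,
      (∫ x in Q 3, ρ ε t x * (Real.exp 1 + nsq (u ε t x)) *
        Real.log (Real.exp 1 + nsq (u ε t x))) ≤ C)
    (ρl : ℝ → (Fin 3 → ℝ) → ℝ) (εs : ℕ → ℝ)
    (hεs : ∀ k, εs k ∈ Set.Ioc (0:ℝ) (eps0 α γ η₀)) (hεs0 : Tendsto εs atTop (𝓝 0))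
    (hLγ : Tendsto (fun k => ∫ s in (0:ℝ)..T, ∫ x in Q 3, |ρ (εs k) s x - ρl s x| ^ γ)
      atTop (𝓝 0))
    (hae : ∀ᵐ s ∂(volume.restrict (Set.Ioc (0:ℝ) T)), ∀ᵐ x ∂(volume.restrict (Q 3)),
      Tendsto (fun k => ρ (εs k) s x) atTop (𝓝 (ρl s x)))
    (ul : ℝ → (Fin 3 → ℝ) → Fin 3 → ℝ)
    (hul0 : ∀ s x, ρl s x = 0 → ul s x = 0)
    (hmom_low : α ≤ 1 →
      ∀ᵐ s ∂(volume.restrict (Set.Ioc (0:ℝ) T)), ∀ᵐ x ∂(volume.restrict (Q 3)),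
        Tendsto (fun k => fun i => ρ (εs k) s x * u (εs k) s x i)
          atTop (𝓝 fun i => ρl s x * ul s x i))
    (hmom_high : 1 < α →
      ∀ᵐ s ∂(volume.restrict (Set.Ioc (0:ℝ) T)), ∀ᵐ x ∂(volume.restrict (Q 3)),
        Tendsto (fun k => fun i => ρ (εs k) s x ^ ((γ + 1)/2) * u (εs k) s x i)
          atTop (𝓝 fun i => ρl s x ^ ((γ + 1)/2) * ul s x i)) :
    ∃ φ : ℕ → ℕ, StrictMono φ ∧
      Tendsto (fun k => ∫ s in (0:ℝ)..T, ∫ x in Q 3,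
          nsq fun i => Real.sqrt (ρ (εs (φ k)) s x) * u (εs (φ k)) s x i
            - Real.sqrt (ρl s x) * ul s x i)
        atTop (𝓝 0) ∧
      (∃ M : ℝ, ∀ᵐ s ∂(volume.restrict (Set.Ioc (0:ℝ) T)),
        (∫ x in Q 3, ρl s x * nsq (ul s x)) ≤ M) := by
  classical
  -- basic setup
  set μt := volume.restrict (Set.Ioc (0:ℝ) T) with hμt
  set μx := volume.restrict (Q 3) with hμx
  haveI : SFinite μt := by rw [hμt]; infer_instance
  haveI : SFinite μx := by rw [hμx]; infer_instance
  have hQmeas : MeasurableSet (Q 3) := MeasurableSet.univ_pi fun _ => measurableSet_Ico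
  have hQsub : Q 3 ⊆ Set.Icc (0 : Fin 3 → ℝ) 1 := by
    rw [← Set.pi_univ_Icc]
    exact Set.pi_mono fun i _ => Set.Ico_subset_Icc_self
  have hQvol : volume (Q 3) ≠ ∞ :=
    (lt_of_le_of_lt (measure_mono hQsub) isCompact_Icc.measure_lt_top).ne
  have intQ : ∀ f : (Fin 3 → ℝ) → ℝ, Continuous f → IntegrableOn f (Q 3) := fun f hf =>
    (hf.continuousOn.integrableOn_compact isCompact_Icc).mono_set hQsub
  have hμtuniv : μt Set.univ = ENNReal.ofReal T := by
    rw [hμt, Measure.restrict_apply_univ, Real.volume_Ioc, sub_zero]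
  set KC := ENNReal.ofReal C * ENNReal.ofReal T with hKC
  have hKCne : KC ≠ ∞ := ENNReal.mul_ne_top ENNReal.ofReal_ne_top ENNReal.ofReal_ne_top
  -- continuity of the approximate solutions
  have contρ : ∀ k, Continuous fun p : ℝ × (Fin 3 → ℝ) => ρ (εs k) p.1 p.2 := fun k =>
    ((hsm _ (hεs k)).1).continuous
  have contu : ∀ k, Continuous fun p : ℝ × (Fin 3 → ℝ) => u (εs k) p.1 p.2 := fun k =>
    ((hsm _ (hεs k)).2).continuous
  have contρs : ∀ k t, Continuous fun x => ρ (εs k) t x := fun k t =>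
    (contρ k).comp (Continuous.prodMk_right t)
  have contus : ∀ k t, Continuous fun x => u (εs k) t x := fun k t =>
    (contu k).comp (Continuous.prodMk_right t)
  have crp : ∀ b : ℝ, 0 < b → Continuous fun y : ℝ => y ^ b := by
    intro b hb
    rw [continuous_iff_continuousAt]
    intro y
    rcases eq_or_ne y 0 with hy | hy
    · exact Real.continuousAt_rpow_const y b (Or.inr hb.le)
    · exact Real.continuousAt_rpow_const y b (Or.inl hy)
  -- the exponent β in the momentum compactness
  obtain ⟨β, hβ, hmom⟩ : ∃ β : ℝ, 0 < β ∧
      ∀ᵐ s ∂μt, ∀ᵐ x ∂μx, Filter.Tendsto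
        (fun k => fun i => ρ (εs k) s x ^ β * u (εs k) s x i) atTop
        (𝓝 fun i => ρl s x ^ β * ul s x i) := by
    rcases le_or_gt α 1 with hcase | hcase
    · refine ⟨1, one_pos, ?_⟩
      filter_upwards [hmom_low hcase] with s hs
      filter_upwards [hs] with x hx
      simpa [Real.rpow_one] using hx
    · exact ⟨(γ + 1)/2, by linarith, hmom_high hcase⟩
  -- measurable representatives
  set Rm : ℝ × (Fin 3 → ℝ) → ℝ := nnRep (fun k p => ρ (εs k) p.1 p.2) with hRmdef
  have mRm : Measurable Rm := measurable_nnRep fun k => (contρ k).measurable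
  have Rm_nonneg : ∀ p, 0 ≤ Rm p := fun p => nnRep_nonneg _ p
  set Um : ℝ × (Fin 3 → ℝ) → Fin 3 → ℝ := fun p i =>
    if 0 < Rm p then
      sgRep (fun k q => ρ (εs k) q.1 q.2 ^ β * u (εs k) q.1 q.2 i) p / Rm p ^ β
    else 0 with hUmdef
  have mUm : Measurable Um := by
    apply measurable_pi_lambda
    intro i
    apply Measurable.ite (measurableSet_lt measurable_const mRm)
    · exact (measurable_sgRep fun k =>
        (((crp β hβ).measurable.comp (contρ k).measurable).mul
          ((measurable_pi_apply i).comp (contu k).measurable))).div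
        ((crp β hβ).measurable.comp mRm)
    · exact measurable_const
  have Um_zero : ∀ p, ¬ 0 < Rm p → Um p = 0 := by
    intro p hp; funext i; simp [hUmdef, hp]
  -- the a.e. limit package
  have Hae : ∀ᵐ s ∂μt, s ∈ Set.Ioc (0:ℝ) T ∧ ∀ᵐ x ∂μx,
      Filter.Tendsto (fun k => ρ (εs k) s x) atTop (𝓝 (Rm (s, x)))
      ∧ ρl s x = Rm (s, x)
      ∧ (∀ i, ul s x i = Um (s, x) i)
      ∧ (0 < Rm (s, x) → Filter.Tendsto (fun k => fun i => u (εs k) s x i) atTop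
          (𝓝 fun i => Um (s, x) i)) := by
    filter_upwards [ae_restrict_mem measurableSet_Ioc, hae, hmom] with s hsIoc h1 h2
    refine ⟨hsIoc, ?_⟩
    filter_upwards [h1, h2] with x hρ hP
    have hsIcc : s ∈ Set.Icc (0:ℝ) T := ⟨hsIoc.1.le, hsIoc.2⟩
    have hpos' : ∀ k, 0 < ρ (εs k) s x := fun k => hpos _ (hεs k) s hsIcc x
    have hρl0 : 0 ≤ ρl s x := ge_of_tendsto hρ (Filter.Eventually.of_forall fun k => (hpos' k).le)
    have hRmeq : Rm (s, x) = ρl s x := nnRep_eq hρ hρl0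
    have hρ' : Filter.Tendsto (fun k => ρ (εs k) s x) atTop (𝓝 (Rm (s, x))) := by
      rw [hRmeq]; exact hρ
    by_cases hc : 0 < ρl s x
    · have hb : Filter.Tendsto (fun k => ρ (εs k) s x ^ β) atTop (𝓝 (ρl s x ^ β)) :=
        ((crp β hβ).tendsto _).comp hρ
      have hbne : ρl s x ^ β ≠ 0 := (Real.rpow_pos_of_pos hc β).ne'
      have hui : ∀ i, Filter.Tendsto (fun k => u (εs k) s x i) atTop (𝓝 (ul s x i)) := by
        intro i
        have hPi : Filter.Tendsto (fun k => ρ (εs k) s x ^ β * u (εs k) s x i) atTop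
            (𝓝 (ρl s x ^ β * ul s x i)) := (tendsto_pi_nhds.1 hP) i
        have hdiv := hPi.div hb hbne
        have heqd : ∀ k, ρ (εs k) s x ^ β * u (εs k) s x i / ρ (εs k) s x ^ β
            = u (εs k) s x i := fun k =>
          mul_div_cancel_left₀ _ (Real.rpow_pos_of_pos (hpos' k) β).ne'
        have hlim : ρl s x ^ β * ul s x i / ρl s x ^ β = ul s x i :=
          mul_div_cancel_left₀ _ hbne
        rw [← hlim]
        exact hdiv.congr heqd
      have hUl : ∀ i, ul s x i = Um (s, x) i := by
        intro i
        have hsg : sgRep (fun k q => ρ (εs k) q.1 q.2 ^ β * u (εs k) q.1 q.2 i) (s, x)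
            = ρl s x ^ β * ul s x i := sgRep_eq ((tendsto_pi_nhds.1 hP) i)
        simp only [hUmdef]
        rw [if_pos (by rw [hRmeq]; exact hc), hsg, hRmeq, mul_div_cancel_left₀ _ hbne]
      refine ⟨hρ', hRmeq.symm, hUl, fun _ => ?_⟩
      rw [tendsto_pi_nhds]
      intro i
      rw [← hUl i]
      exact hui i
    · have h0 : ρl s x = 0 := le_antisymm (not_lt.1 hc) hρl0
      have hnRm : ¬ 0 < Rm (s, x) := by rw [hRmeq, h0]; exact lt_irrefl 0
      have hU0 : Um (s, x) = 0 := Um_zero _ hnRm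
      refine ⟨hρ', hRmeq.symm, fun i => ?_, fun hr => absurd hr hnRm⟩
      rw [hul0 s x h0, hU0]
  -- measurability toolkit
  have mnsq : ∀ F : ℝ × (Fin 3 → ℝ) → Fin 3 → ℝ, Measurable F →
      Measurable fun p => nsq (F p) := by
    intro F hF
    unfold nsq
    exact Finset.measurable_sum _ fun i _ => ((measurable_pi_apply i).comp hF).pow_const 2
  -- per-time energy and entropy bounds
  have perE : ∀ k, ∀ s ∈ Set.Icc (0:ℝ) T,
      (∫ x in Q 3, ρ (εs k) s x * nsq (u (εs k) s x)) ≤ C ∧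
      (∫ x in Q 3, ρ (εs k) s x) ≤ C ∧
      (∫ x in Q 3, ρ (εs k) s x ^ γ) ≤ C := by
    intro k s hs
    have hpos' : ∀ x, 0 < ρ (εs k) s x := fun x => hpos _ (hεs k) s hs x
    have hterm2 : 0 ≤ ∫ t in (0:ℝ)..T, ∫ x in Q 3,
        hvis (εs k) α (γ + 1/6) (ρ (εs k) t x) * gradVecSq (u (εs k) t) x := by
      apply intervalIntegral.integral_nonneg hT.le
      intro t ht
      apply integral_nonneg
      intro x
      apply mul_nonneg
      · have h0 : (0:ℝ) ≤ ρ (εs k) t x := (hpos _ (hεs k) t ht x).le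
        have hε0 : (0:ℝ) ≤ εs k := (hεs k).1.le
        unfold hvis
        have h1 := Real.rpow_nonneg h0 α
        have h2 := Real.rpow_nonneg h0 ((7:ℝ)/8)
        have h3 := Real.rpow_nonneg h0 (γ + 1/6)
        have h4 := Real.rpow_nonneg hε0 ((1:ℝ)/3)
        nlinarith
      · exact Finset.sum_nonneg fun i _ => Finset.sum_nonneg fun j _ => sq_nonneg _
    have hsum := hen _ (hεs k) s hs
    have hsum' : (∫ x in Q 3, (ρ (εs k) s x * nsq (u (εs k) s x) + ρ (εs k) s x
        + ρ (εs k) s x ^ γ)) ≤ C := by linarith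
    have i1 : IntegrableOn (fun x => ρ (εs k) s x * nsq (u (εs k) s x)) (Q 3) :=
      intQ _ ((contρs k s).mul (continuous_nsq.comp (contus k s)))
    have i2 : IntegrableOn (fun x => ρ (εs k) s x) (Q 3) := intQ _ (contρs k s)
    have i3 : IntegrableOn (fun x => ρ (εs k) s x ^ γ) (Q 3) :=
      intQ _ ((crp γ (by linarith)).comp (contρs k s))
    have isum : IntegrableOn (fun x => ρ (εs k) s x * nsq (u (εs k) s x) + ρ (εs k) s x
        + ρ (εs k) s x ^ γ) (Q 3) := (i1.add i2).add i3
    have hp1 : ∀ x, 0 ≤ ρ (εs k) s x * nsq (u (εs k) s x) := fun x =>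
      mul_nonneg (hpos' x).le (nsq_nonneg _)
    have hp2 : ∀ x, (0:ℝ) ≤ ρ (εs k) s x := fun x => (hpos' x).le
    have hp3 : ∀ x, (0:ℝ) ≤ ρ (εs k) s x ^ γ := fun x => Real.rpow_nonneg (hp2 x) γ
    refine ⟨le_trans (integral_mono i1 isum fun x => by
        have := hp2 x; have := hp3 x; simp only []; linarith) hsum',
      le_trans (integral_mono i2 isum fun x => by
        have := hp1 x; have := hp3 x; simp only []; linarith) hsum',
      le_trans (integral_mono i3 isum fun x => by
        have := hp1 x; have := hp2 x; simp only []; linarith) hsum'⟩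
  have perMV : ∀ k, ∀ s ∈ Set.Icc (0:ℝ) T,
      (∫ x in Q 3, ρ (εs k) s x * Phi (u (εs k) s x)) ≤ C := by
    intro k s hs
    have h := hmv _ (hεs k) s hs
    simpa [Phi, mul_assoc] using h
  -- lintegral versions of the per-time bounds
  have lE1 : ∀ k, ∀ s ∈ Set.Icc (0:ℝ) T,
      (∫⁻ x, ENNReal.ofReal (ρ (εs k) s x * nsq (u (εs k) s x)) ∂μx) ≤ ENNReal.ofReal C := by
    intro k s hs
    rw [← ofReal_integral_eq_lintegral_ofReal
      (intQ (fun x => ρ (εs k) s x * nsq (u (εs k) s x))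
        ((contρs k s).mul (continuous_nsq.comp (contus k s))))
      (Filter.Eventually.of_forall fun x =>
        mul_nonneg (hpos _ (hεs k) s hs x).le (nsq_nonneg _))]
    exact ENNReal.ofReal_le_ofReal (perE k s hs).1
  have lE2 : ∀ k, ∀ s ∈ Set.Icc (0:ℝ) T,
      (∫⁻ x, ENNReal.ofReal (ρ (εs k) s x) ∂μx) ≤ ENNReal.ofReal C := by
    intro k s hs
    rw [← ofReal_integral_eq_lintegral_ofReal (intQ _ (contρs k s))
      (Filter.Eventually.of_forall fun x => (hpos _ (hεs k) s hs x).le)]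
    exact ENNReal.ofReal_le_ofReal (perE k s hs).2.1
  have lE3 : ∀ k, ∀ s ∈ Set.Icc (0:ℝ) T,
      (∫⁻ x, ENNReal.ofReal (ρ (εs k) s x ^ γ) ∂μx) ≤ ENNReal.ofReal C := by
    intro k s hs
    rw [← ofReal_integral_eq_lintegral_ofReal
      (intQ (fun x => ρ (εs k) s x ^ γ) ((crp γ (by linarith)).comp (contρs k s)))
      (Filter.Eventually.of_forall fun x =>
        Real.rpow_nonneg (hpos _ (hεs k) s hs x).le γ)]
    exact ENNReal.ofReal_le_ofReal (perE k s hs).2.2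
  have lMV : ∀ k, ∀ s ∈ Set.Icc (0:ℝ) T,
      (∫⁻ x, ENNReal.ofReal (ρ (εs k) s x * Phi (u (εs k) s x)) ∂μx) ≤ ENNReal.ofReal C := by
    intro k s hs
    rw [← ofReal_integral_eq_lintegral_ofReal
      (intQ (fun x => ρ (εs k) s x * Phi (u (εs k) s x))
        ((contρs k s).mul (continuous_Phi.comp (contus k s))))
      (Filter.Eventually.of_forall fun x =>
        mul_nonneg (hpos _ (hεs k) s hs x).le (Phi_nonneg _))]
    exact ENNReal.ofReal_le_ofReal (perMV k s hs)
  -- iterated bound from a per-time bound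
  have itbd : ∀ F : ℝ × (Fin 3 → ℝ) → ℝ≥0∞,
      (∀ s ∈ Set.Icc (0:ℝ) T, (∫⁻ x, F (s, x) ∂μx) ≤ ENNReal.ofReal C) →
      (∫⁻ s, ∫⁻ x, F (s, x) ∂μx ∂μt) ≤ KC := by
    intro F hF
    calc (∫⁻ s, ∫⁻ x, F (s, x) ∂μx ∂μt) ≤ ∫⁻ _, ENNReal.ofReal C ∂μt := by
          apply lintegral_mono_ae
          filter_upwards [ae_restrict_mem measurableSet_Ioc] with s hs
          exact hF s ⟨hs.1.le, hs.2⟩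
      _ = KC := by rw [lintegral_const, hμtuniv, hKC]
  -- Fatou-type bound
  have fatou_bound : ∀ (F : ℝ × (Fin 3 → ℝ) → ℝ≥0∞) (G : ℕ → ℝ × (Fin 3 → ℝ) → ℝ≥0∞),
      (∀ k, Measurable (G k)) →
      (∀ᵐ s ∂μt, ∀ᵐ x ∂μx, F (s, x) ≤ Filter.liminf (fun k => G k (s, x)) atTop) →
      (∀ k, (∫⁻ s, ∫⁻ x, G k (s, x) ∂μx ∂μt) ≤ KC) →
      (∫⁻ s, ∫⁻ x, F (s, x) ∂μx ∂μt) ≤ KC := by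
    intro F G hGm hFle hGb
    calc (∫⁻ s, ∫⁻ x, F (s, x) ∂μx ∂μt)
        ≤ ∫⁻ s, ∫⁻ x, Filter.liminf (fun k => G k (s, x)) atTop ∂μx ∂μt :=
          I2_mono_ae μt μx (f := F) (g := fun p => Filter.liminf (fun k => G k p) atTop) hFle
      _ ≤ Filter.liminf (fun k => ∫⁻ s, ∫⁻ x, G k (s, x) ∂μx ∂μt) atTop :=
          I2_liminf_le μt μx (f := G) hGm
      _ ≤ KC := by
          have h1 := Filter.liminf_le_liminf (Filter.Eventually.of_forall hGb)
            (f := atTop (α := ℕ))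
          simpa [Filter.liminf_const] using h1
  -- iterated tail bounds
  have mPE : ∀ k, Measurable fun p : ℝ × (Fin 3 → ℝ) =>
      ENNReal.ofReal (ρ (εs k) p.1 p.2 * Phi (u (εs k) p.1 p.2)) :=
    fun k => (((contρ k).mul (continuous_Phi.comp (contu k))).measurable).ennreal_ofReal
  have TailE : ∀ k, (∫⁻ s, ∫⁻ x,
      ENNReal.ofReal (ρ (εs k) s x * Phi (u (εs k) s x)) ∂μx ∂μt) ≤ KC :=
    fun k => itbd (fun p => ENNReal.ofReal (ρ (εs k) p.1 p.2 * Phi (u (εs k) p.1 p.2)))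
      (lMV k)
  have TailL : (∫⁻ s, ∫⁻ x, ENNReal.ofReal (Rm (s, x) * Phi (Um (s, x))) ∂μx ∂μt) ≤ KC := by
    apply fatou_bound (fun p => ENNReal.ofReal (Rm p * Phi (Um p)))
      (fun k p => ENNReal.ofReal (ρ (εs k) p.1 p.2 * Phi (u (εs k) p.1 p.2))) mPE ?_ TailE
    filter_upwards [Hae] with s hs
    filter_upwards [hs.2] with x hx
    rcases lt_or_ge 0 (Rm (s, x)) with hr | hr
    · have h1 : Filter.Tendsto (fun k => ρ (εs k) s x * Phi (u (εs k) s x)) atTop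
          (𝓝 (Rm (s, x) * Phi (Um (s, x)))) :=
        hx.1.mul ((continuous_Phi.tendsto _).comp (hx.2.2.2 hr))
      exact le_of_eq ((ENNReal.tendsto_ofReal h1).liminf_eq).symm
    · have h0 : Rm (s, x) = 0 := le_antisymm hr (Rm_nonneg _)
      simp [h0]
  have mRR : Measurable fun p : ℝ × (Fin 3 → ℝ) => ENNReal.ofReal (Rm p) :=
    mRm.ennreal_ofReal
  have mRG : Measurable fun p : ℝ × (Fin 3 → ℝ) => ENNReal.ofReal (Rm p ^ γ) :=
    ((crp γ (by linarith)).measurable.comp mRm).ennreal_ofReal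
  have bndRR : (∫⁻ s, ∫⁻ x, ENNReal.ofReal (Rm (s, x)) ∂μx ∂μt) ≤ KC := by
    apply fatou_bound (fun p => ENNReal.ofReal (Rm p))
      (fun k p => ENNReal.ofReal (ρ (εs k) p.1 p.2))
      (fun k => (contρ k).measurable.ennreal_ofReal) ?_
      (fun k => itbd (fun p => ENNReal.ofReal (ρ (εs k) p.1 p.2)) (lE2 k))
    filter_upwards [Hae] with s hs
    filter_upwards [hs.2] with x hx
    exact le_of_eq ((ENNReal.tendsto_ofReal hx.1).liminf_eq).symm
  have bndRG : (∫⁻ s, ∫⁻ x, ENNReal.ofReal (Rm (s, x) ^ γ) ∂μx ∂μt) ≤ KC := by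
    apply fatou_bound (fun p => ENNReal.ofReal (Rm p ^ γ))
      (fun k p => ENNReal.ofReal (ρ (εs k) p.1 p.2 ^ γ))
      (fun k => ((crp γ (by linarith)).comp (contρ k)).measurable.ennreal_ofReal) ?_
      (fun k => itbd (fun p => ENNReal.ofReal (ρ (εs k) p.1 p.2 ^ γ)) (lE3 k))
    filter_upwards [Hae] with s hs
    filter_upwards [hs.2] with x hx
    have h1 : Filter.Tendsto (fun k => ρ (εs k) s x ^ γ) atTop (𝓝 (Rm (s, x) ^ γ)) :=
      ((crp γ (by linarith)).tendsto _).comp hx.1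
    exact le_of_eq ((ENNReal.tendsto_ofReal h1).liminf_eq).symm
  -- convergence of the Lᵞ distance, lintegral version
  have mDG : ∀ k, Measurable fun p : ℝ × (Fin 3 → ℝ) =>
      ENNReal.ofReal (|ρ (εs k) p.1 p.2 - Rm p| ^ γ) := by
    intro k
    exact (((crp γ (by linarith)).measurable).comp
      (((contρ k).measurable.sub mRm).abs)).ennreal_ofReal
  have hHk : Filter.Tendsto (fun k => ∫⁻ s, ∫⁻ x,
      ENNReal.ofReal (|ρ (εs k) s x - Rm (s, x)| ^ γ) ∂μx ∂μt) atTop (𝓝 0) := by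
    have hγ0 : (0:ℝ) < γ := by linarith
    -- pointwise bound |a - b|^γ ≤ a^γ + b^γ for nonnegative a, b
    have habs : ∀ a b : ℝ, 0 ≤ a → 0 ≤ b → |a - b| ^ γ ≤ a ^ γ + b ^ γ := by
      intro a b ha hb
      have h1 : |a - b| ≤ max a b := by
        rcases le_total a b with h | h
        · rw [abs_of_nonpos (by linarith)]
          exact le_max_of_le_right (by linarith)
        · rw [abs_of_nonneg (by linarith)]
          exact le_max_of_le_left (by linarith)
      calc |a - b| ^ γ ≤ (max a b) ^ γ := Real.rpow_le_rpow (abs_nonneg _) h1 hγ0.le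
        _ ≤ a ^ γ + b ^ γ := by
            rcases max_cases a b with ⟨h2, _⟩ | ⟨h2, _⟩ <;> rw [h2]
            · nlinarith [Real.rpow_nonneg hb γ]
            · nlinarith [Real.rpow_nonneg ha γ]
    -- iterated integral bound
    have HkleKK : ∀ k, (∫⁻ s, ∫⁻ x, ENNReal.ofReal (|ρ (εs k) s x - Rm (s, x)| ^ γ) ∂μx ∂μt)
        ≤ KC + KC := by
      intro k
      calc (∫⁻ s, ∫⁻ x, ENNReal.ofReal (|ρ (εs k) s x - Rm (s, x)| ^ γ) ∂μx ∂μt)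
          ≤ ∫⁻ s, ∫⁻ x, (ENNReal.ofReal (ρ (εs k) s x ^ γ)
              + ENNReal.ofReal (Rm (s, x) ^ γ)) ∂μx ∂μt := by
            apply I2_mono_ae μt μx
              (f := fun p => ENNReal.ofReal (|ρ (εs k) p.1 p.2 - Rm p| ^ γ))
              (g := fun p => ENNReal.ofReal (ρ (εs k) p.1 p.2 ^ γ) + ENNReal.ofReal (Rm p ^ γ))
            filter_upwards [ae_restrict_mem measurableSet_Ioc] with s hs
            refine Filter.Eventually.of_forall fun x => ?_
            have h1 := habs (ρ (εs k) s x) (Rm (s, x))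
              (hpos _ (hεs k) s ⟨hs.1.le, hs.2⟩ x).le (Rm_nonneg _)
            calc ENNReal.ofReal (|ρ (εs k) s x - Rm (s, x)| ^ γ)
                ≤ ENNReal.ofReal (ρ (εs k) s x ^ γ + Rm (s, x) ^ γ) :=
                  ENNReal.ofReal_le_ofReal h1
              _ = _ := ENNReal.ofReal_add
                  (Real.rpow_nonneg (hpos _ (hεs k) s ⟨hs.1.le, hs.2⟩ x).le γ)
                  (Real.rpow_nonneg (Rm_nonneg _) γ)
        _ = (∫⁻ s, ∫⁻ x, ENNReal.ofReal (ρ (εs k) s x ^ γ) ∂μx ∂μt)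
            + ∫⁻ s, ∫⁻ x, ENNReal.ofReal (Rm (s, x) ^ γ) ∂μx ∂μt :=
            I2_add μt μx (f := fun p => ENNReal.ofReal (ρ (εs k) p.1 p.2 ^ γ))
              (g := fun p => ENNReal.ofReal (Rm p ^ γ))
              (((crp γ hγ0).comp (contρ k)).measurable.ennreal_ofReal) mRG
        _ ≤ KC + KC := add_le_add
            (itbd (fun p => ENNReal.ofReal (ρ (εs k) p.1 p.2 ^ γ)) (lE3 k)) bndRG
    have hKK : KC + KC ≠ ∞ := ENNReal.add_ne_top.2 ⟨hKCne, hKCne⟩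
    have hne : ∀ k, (∫⁻ s, ∫⁻ x, ENNReal.ofReal (|ρ (εs k) s x - Rm (s, x)| ^ γ) ∂μx ∂μt)
        ≠ ∞ := fun k => ne_top_of_le_ne_top hKK (HkleKK k)
    -- a.e. identification with the Bochner integrals from hLγ
    have mDGre : ∀ k, Measurable fun p : ℝ × (Fin 3 → ℝ) => |ρ (εs k) p.1 p.2 - Rm p| ^ γ :=
      fun k => (crp γ hγ0).measurable.comp (((contρ k).measurable.sub mRm).abs)
    have mDGin : ∀ k, Measurable fun s =>
        ∫⁻ x, ENNReal.ofReal (|ρ (εs k) s x - Rm (s, x)| ^ γ) ∂μx := fun k =>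
      Measurable.lintegral_prod_right' (f := fun p => ENNReal.ofReal (|ρ (εs k) p.1 p.2 - Rm p| ^ γ)) (mDG k)
    have heq : ∀ k, ∀ᵐ s ∂μt,
        (∫ x in Q 3, |ρ (εs k) s x - ρl s x| ^ γ)
          = (∫⁻ x, ENNReal.ofReal (|ρ (εs k) s x - Rm (s, x)| ^ γ) ∂μx).toReal := by
      intro k
      filter_upwards [Hae] with s hs
      have e1 : (∫ x in Q 3, |ρ (εs k) s x - ρl s x| ^ γ)
          = ∫ x, |ρ (εs k) s x - Rm (s, x)| ^ γ ∂μx := by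
        apply integral_congr_ae
        filter_upwards [hs.2] with x hx
        rw [hx.2.1]
      rw [e1, integral_eq_lintegral_of_nonneg_ae
        (Filter.Eventually.of_forall fun x => Real.rpow_nonneg (abs_nonneg _) γ)
        ((mDGre k).comp measurable_prodMk_left).aestronglyMeasurable]
    have hHt : ∀ k, (∫ s in (0:ℝ)..T, ∫ x in Q 3, |ρ (εs k) s x - ρl s x| ^ γ)
        = (∫⁻ s, ∫⁻ x, ENNReal.ofReal (|ρ (εs k) s x - Rm (s, x)| ^ γ) ∂μx ∂μt).toReal := by
      intro k
      rw [intervalIntegral.integral_of_le hT.le]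
      rw [integral_congr_ae (heq k)]
      exact integral_toReal (mDGin k).aemeasurable
        (ae_lt_top (mDGin k) (hne k))
    have hfun : (fun k => ∫⁻ s, ∫⁻ x,
        ENNReal.ofReal (|ρ (εs k) s x - Rm (s, x)| ^ γ) ∂μx ∂μt)
        = fun k => ENNReal.ofReal (∫ s in (0:ℝ)..T, ∫ x in Q 3, |ρ (εs k) s x - ρl s x| ^ γ) := by
      funext k
      rw [hHt k, ENNReal.ofReal_toReal (hne k)]
    rw [hfun]
    have := ENNReal.tendsto_ofReal hLγ
    simpa using this
  -- L¹ convergence of the densities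
  have mDA : ∀ k, Measurable fun p : ℝ × (Fin 3 → ℝ) =>
      ENNReal.ofReal |ρ (εs k) p.1 p.2 - Rm p| :=
    fun k => (((contρ k).measurable.sub mRm).abs).ennreal_ofReal
  have hDk : Filter.Tendsto (fun k => ∫⁻ s, ∫⁻ x,
      ENNReal.ofReal (|ρ (εs k) s x - Rm (s, x)|) ∂μx ∂μt) atTop (𝓝 0) := by
    apply I2_tendsto_zero μt μx
      (h := fun k p => ENNReal.ofReal |ρ (εs k) p.1 p.2 - Rm p|)
      (r := fun k p => ENNReal.ofReal (|ρ (εs k) p.1 p.2 - Rm p| ^ γ))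
      (q := fun _ => 1) mDA mDG measurable_const
    · rw [show (∫⁻ s, ∫⁻ x, (1:ℝ≥0∞) ∂μx ∂μt) = μx Set.univ * μt Set.univ by
        simp [lintegral_const]]
      rw [hμtuniv, hμx, Measure.restrict_apply_univ]
      exact ENNReal.mul_ne_top hQvol ENNReal.ofReal_ne_top
    · intro k
      refine Filter.Eventually.of_forall fun s => Filter.Eventually.of_forall fun x => ?_
      have h1 : |ρ (εs k) s x - Rm (s, x)| ≤ |ρ (εs k) s x - Rm (s, x)| ^ γ + 1 := by
        set a := |ρ (εs k) s x - Rm (s, x)| with ha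
        rcases le_total a 1 with h | h
        · have := Real.rpow_nonneg (abs_nonneg (ρ (εs k) s x - Rm (s, x))) γ
          rw [← ha] at this
          linarith
        · have h2 : a ^ (1:ℝ) ≤ a ^ γ := Real.rpow_le_rpow_of_exponent_le h (by linarith)
          rw [Real.rpow_one] at h2
          linarith
      calc ENNReal.ofReal |ρ (εs k) s x - Rm (s, x)|
          ≤ ENNReal.ofReal (|ρ (εs k) s x - Rm (s, x)| ^ γ + 1) := ENNReal.ofReal_le_ofReal h1
        _ = ENNReal.ofReal (|ρ (εs k) s x - Rm (s, x)| ^ γ) + 1 := by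
            rw [ENNReal.ofReal_add (Real.rpow_nonneg (abs_nonneg _) γ) zero_le_one,
              ENNReal.ofReal_one]
    · exact hHk
    · filter_upwards [Hae] with s hs
      filter_upwards [hs.2] with x hx
      have h0 : Filter.Tendsto (fun k => |ρ (εs k) s x - Rm (s, x)|) atTop (𝓝 0) := by
        have := (hx.1.sub (tendsto_const_nhds (x := Rm (s, x)))).abs
        simpa using this
      simpa using ENNReal.tendsto_ofReal h0
  -- convergence of the truncated parts
  have mMM : ∀ M : ℝ, 0 < M → ∀ k, Measurable fun p : ℝ × (Fin 3 → ℝ) =>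
      ENNReal.ofReal (nsq fun i => Real.sqrt (ρ (εs k) p.1 p.2) * trv M (u (εs k) p.1 p.2) i
        - Real.sqrt (Rm p) * trv M (Um p) i) := by
    intro M hM k
    apply Measurable.ennreal_ofReal
    apply mnsq
    apply measurable_pi_lambda
    intro i
    apply Measurable.sub
    · exact (Real.continuous_sqrt.measurable.comp (contρ k).measurable).mul
        ((measurable_pi_apply i).comp
          ((continuous_trv M hM).measurable.comp (contu k).measurable))
    · exact (Real.continuous_sqrt.measurable.comp mRm).mul
        ((measurable_pi_apply i).comp ((continuous_trv M hM).measurable.comp mUm))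
  have hGk : ∀ M : ℝ, 0 < M → Filter.Tendsto (fun k => ∫⁻ s, ∫⁻ x,
      ENNReal.ofReal (nsq fun i => Real.sqrt (ρ (εs k) s x) * trv M (u (εs k) s x) i
        - Real.sqrt (Rm (s, x)) * trv M (Um (s, x)) i) ∂μx ∂μt) atTop (𝓝 0) := by
    intro M hM
    apply I2_tendsto_zero μt μx
      (h := fun k p => ENNReal.ofReal (nsq fun i => Real.sqrt (ρ (εs k) p.1 p.2)
        * trv M (u (εs k) p.1 p.2) i - Real.sqrt (Rm p) * trv M (Um p) i))
      (r := fun k p => ENNReal.ofReal (2 * M ^ 2) * ENNReal.ofReal |ρ (εs k) p.1 p.2 - Rm p|)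
      (q := fun p => ENNReal.ofReal (4 * M ^ 2) * ENNReal.ofReal (Rm p))
      (mMM M hM) (fun k => measurable_const.mul (mDA k)) (measurable_const.mul mRR)
    · have hq : (∫⁻ s, ∫⁻ x, (ENNReal.ofReal (4 * M ^ 2) * ENNReal.ofReal (Rm (s, x))) ∂μx ∂μt)
          = ENNReal.ofReal (4 * M ^ 2) * ∫⁻ s, ∫⁻ x, ENNReal.ofReal (Rm (s, x)) ∂μx ∂μt :=
        I2_cmul μt μx (f := fun p => ENNReal.ofReal (Rm p)) mRR _
      rw [hq]
      exact ENNReal.mul_ne_top ENNReal.ofReal_ne_top (ne_top_of_le_ne_top hKCne bndRR)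
    · intro k
      filter_upwards [ae_restrict_mem measurableSet_Ioc] with s hs
      refine Filter.Eventually.of_forall fun x => ?_
      have hρe0 : 0 ≤ ρ (εs k) s x := (hpos _ (hεs k) s ⟨hs.1.le, hs.2⟩ x).le
      have h1 := keyC M (ρ (εs k) s x) (Rm (s, x)) (u (εs k) s x) (Um (s, x))
        hρe0 (Rm_nonneg _) hM
      have h3 : ρ (εs k) s x ≤ |ρ (εs k) s x - Rm (s, x)| + Rm (s, x) := by
        have := le_abs_self (ρ (εs k) s x - Rm (s, x)); linarith
      have h2 : nsq (fun i => Real.sqrt (ρ (εs k) s x) * trv M (u (εs k) s x) i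
          - Real.sqrt (Rm (s, x)) * trv M (Um (s, x)) i)
          ≤ 2 * M ^ 2 * |ρ (εs k) s x - Rm (s, x)| + 4 * M ^ 2 * Rm (s, x) := by
        nlinarith [sq_nonneg M, abs_nonneg (ρ (εs k) s x - Rm (s, x)), Rm_nonneg (s, x)]
      calc ENNReal.ofReal (nsq fun i => Real.sqrt (ρ (εs k) s x) * trv M (u (εs k) s x) i
          - Real.sqrt (Rm (s, x)) * trv M (Um (s, x)) i)
          ≤ ENNReal.ofReal (2 * M ^ 2 * |ρ (εs k) s x - Rm (s, x)| + 4 * M ^ 2 * Rm (s, x)) :=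
            ENNReal.ofReal_le_ofReal h2
        _ = ENNReal.ofReal (2 * M ^ 2) * ENNReal.ofReal |ρ (εs k) s x - Rm (s, x)|
            + ENNReal.ofReal (4 * M ^ 2) * ENNReal.ofReal (Rm (s, x)) := by
            rw [← ENNReal.ofReal_mul (by positivity : (0:ℝ) ≤ 2 * M ^ 2),
              ← ENNReal.ofReal_mul (by positivity : (0:ℝ) ≤ 4 * M ^ 2),
              ← ENNReal.ofReal_add (mul_nonneg (by positivity) (abs_nonneg _))
                (mul_nonneg (by positivity) (Rm_nonneg _))]
    · have hfr : (fun k => ∫⁻ s, ∫⁻ x, (ENNReal.ofReal (2 * M ^ 2)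
          * ENNReal.ofReal |ρ (εs k) s x - Rm (s, x)|) ∂μx ∂μt)
          = fun k => ENNReal.ofReal (2 * M ^ 2) * ∫⁻ s, ∫⁻ x,
            ENNReal.ofReal |ρ (εs k) s x - Rm (s, x)| ∂μx ∂μt :=
        funext fun k => I2_cmul μt μx
          (f := fun p => ENNReal.ofReal |ρ (εs k) p.1 p.2 - Rm p|) (mDA k) _
      rw [hfr]
      have h4 := ENNReal.Tendsto.const_mul (a := ENNReal.ofReal (2 * M ^ 2)) hDk
        (Or.inr (ENNReal.ofReal_ne_top (r := 2 * M ^ 2)))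
      simpa using h4
    · filter_upwards [Hae] with s hs
      filter_upwards [hs.2] with x hx
      have hpos' : ∀ k, 0 < ρ (εs k) s x := fun k => hpos _ (hεs k) s ⟨hs.1.1.le, hs.1.2⟩ x
      rcases lt_or_ge 0 (Rm (s, x)) with hr | hr
      · have hsq : Filter.Tendsto (fun k => Real.sqrt (ρ (εs k) s x)) atTop
            (𝓝 (Real.sqrt (Rm (s, x)))) := (Real.continuous_sqrt.tendsto _).comp hx.1
        have htr : Filter.Tendsto (fun k => trv M (u (εs k) s x)) atTop
            (𝓝 (trv M (Um (s, x)))) := ((continuous_trv M hM).tendsto _).comp (hx.2.2.2 hr)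
        have hv : Filter.Tendsto (fun k => fun i => Real.sqrt (ρ (εs k) s x)
            * trv M (u (εs k) s x) i - Real.sqrt (Rm (s, x)) * trv M (Um (s, x)) i) atTop
            (𝓝 fun i => Real.sqrt (Rm (s, x)) * trv M (Um (s, x)) i
              - Real.sqrt (Rm (s, x)) * trv M (Um (s, x)) i) := by
          rw [tendsto_pi_nhds]
          intro i
          exact (hsq.mul (((continuous_apply i).tendsto _).comp htr)).sub tendsto_const_nhds
        have h2 := (continuous_nsq.tendsto _).comp hv
        have h3 : nsq (fun i => Real.sqrt (Rm (s, x)) * trv M (Um (s, x)) i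
            - Real.sqrt (Rm (s, x)) * trv M (Um (s, x)) i) = 0 := by
          simp [nsq]
        rw [h3] at h2
        simpa using ENNReal.tendsto_ofReal h2
      · have h0 : Rm (s, x) = 0 := le_antisymm hr (Rm_nonneg _)
        have hρ0 : Filter.Tendsto (fun k => ρ (εs k) s x) atTop (𝓝 0) := by
          rw [← h0]; exact hx.1
        have hle : ∀ k, nsq (fun i => Real.sqrt (ρ (εs k) s x) * trv M (u (εs k) s x) i
            - Real.sqrt (Rm (s, x)) * trv M (Um (s, x)) i) ≤ ρ (εs k) s x * M ^ 2 := by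
          intro k
          have heq : (fun i => Real.sqrt (ρ (εs k) s x) * trv M (u (εs k) s x) i
              - Real.sqrt (Rm (s, x)) * trv M (Um (s, x)) i)
              = fun i => Real.sqrt (ρ (εs k) s x) * trv M (u (εs k) s x) i := by
            funext i
            rw [h0, Real.sqrt_zero, zero_mul, sub_zero]
          rw [heq, nsq_smul, Real.sq_sqrt (hpos' k).le]
          exact mul_le_mul_of_nonneg_left (nsq_trv_le M hM _) (hpos' k).le
        have h2 : Filter.Tendsto (fun k => nsq (fun i => Real.sqrt (ρ (εs k) s x)
            * trv M (u (εs k) s x) i - Real.sqrt (Rm (s, x)) * trv M (Um (s, x)) i)) atTop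
            (𝓝 0) := by
          apply squeeze_zero (fun k => nsq_nonneg _) hle
          simpa using hρ0.mul_const (M ^ 2)
        simpa using ENNReal.tendsto_ofReal h2
  -- the main quantity, lintegral version
  have mDD : ∀ k, Measurable fun p : ℝ × (Fin 3 → ℝ) =>
      ENNReal.ofReal (nsq fun i => Real.sqrt (ρ (εs k) p.1 p.2) * u (εs k) p.1 p.2 i
        - Real.sqrt (Rm p) * Um p i) := by
    intro k
    apply Measurable.ennreal_ofReal
    apply mnsq
    apply measurable_pi_lambda
    intro i
    apply Measurable.sub
    · exact (Real.continuous_sqrt.measurable.comp (contρ k).measurable).mul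
        ((measurable_pi_apply i).comp (contu k).measurable)
    · exact (Real.continuous_sqrt.measurable.comp mRm).mul
        ((measurable_pi_apply i).comp mUm)
  have hLk : Filter.Tendsto (fun k => ∫⁻ s, ∫⁻ x,
      ENNReal.ofReal (nsq fun i => Real.sqrt (ρ (εs k) s x) * u (εs k) s x i
        - Real.sqrt (Rm (s, x)) * Um (s, x) i) ∂μx ∂μt) atTop (𝓝 0) := by
    have mPLm : Measurable fun p : ℝ × (Fin 3 → ℝ) => ENNReal.ofReal (Rm p * Phi (Um p)) :=
      (mRm.mul (continuous_Phi.measurable.comp mUm)).ennreal_ofReal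
    rw [ENNReal.tendsto_nhds_zero]
    intro ε' hε'
    rcases eq_or_ne ε' ∞ with rfl | hε'top
    · exact Filter.Eventually.of_forall fun k => le_top
    have hq4 : ε' / 2 / 2 ≠ 0 := (ENNReal.half_pos (ENNReal.half_pos hε'.ne').ne').ne'
    have hq4top : ε' / 2 / 2 ≠ ∞ :=
      ne_top_of_le_ne_top (ne_top_of_le_ne_top hε'top ENNReal.half_le_self) ENNReal.half_le_self
    set η : ℝ := min 1 ((ε' / 2 / 2).toReal) with hηdef
    have hη0 : 0 < η := lt_min one_pos (ENNReal.toReal_pos hq4 hq4top)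
    set R : ℝ := max 1 (3 * C * T / η) with hRdef
    set M : ℝ := Real.exp R with hMdef
    have hM0 : 0 < M := Real.exp_pos R
    have hexpR1 : (1:ℝ) ≤ M := Real.one_le_exp (le_trans zero_le_one (le_max_left _ _))
    have hLpos : 0 < Real.log (Real.exp 1 + M ^ 2) := logM_pos M
    have hL1 : R ≤ Real.log (Real.exp 1 + M ^ 2) := by
      rw [← Real.log_exp R]
      apply Real.log_le_log (Real.exp_pos R)
      have h1 : Real.exp R = M := rfl
      nlinarith [Real.exp_pos 1]
    have hLM : 3 * C * T / Real.log (Real.exp 1 + M ^ 2) ≤ η := by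
      rw [div_le_iff₀ hLpos]
      have hRge : 3 * C * T / η ≤ R := le_max_right _ _
      calc 3 * C * T = η * (3 * C * T / η) := by field_simp
        _ ≤ η * Real.log (Real.exp 1 + M ^ 2) :=
            mul_le_mul_of_nonneg_left (le_trans hRge hL1) hη0.le
    have hcKC : ENNReal.ofReal (3 / Real.log (Real.exp 1 + M ^ 2)) * KC ≤ ε' / 2 / 2 := by
      have h1 : ENNReal.ofReal (3 / Real.log (Real.exp 1 + M ^ 2)) * KC
          = ENNReal.ofReal (3 / Real.log (Real.exp 1 + M ^ 2) * C * T) := by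
        rw [hKC, ← mul_assoc, ← ENNReal.ofReal_mul (by positivity),
          ← ENNReal.ofReal_mul (by positivity)]
      rw [h1]
      have h2 : 3 / Real.log (Real.exp 1 + M ^ 2) * C * T ≤ η := by
        have h3 : 3 / Real.log (Real.exp 1 + M ^ 2) * C * T
            = 3 * C * T / Real.log (Real.exp 1 + M ^ 2) := by ring
        rw [h3]; exact hLM
      calc ENNReal.ofReal (3 / Real.log (Real.exp 1 + M ^ 2) * C * T)
          ≤ ENNReal.ofReal η := ENNReal.ofReal_le_ofReal h2
        _ ≤ ENNReal.ofReal ((ε' / 2 / 2).toReal) := ENNReal.ofReal_le_ofReal (min_le_right _ _)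
        _ = ε' / 2 / 2 := ENNReal.ofReal_toReal hq4top
    -- main decomposition
    have key : ∀ k, (∫⁻ s, ∫⁻ x, ENNReal.ofReal (nsq fun i => Real.sqrt (ρ (εs k) s x)
          * u (εs k) s x i - Real.sqrt (Rm (s, x)) * Um (s, x) i) ∂μx ∂μt)
        ≤ ENNReal.ofReal 3 * (∫⁻ s, ∫⁻ x, ENNReal.ofReal (nsq fun i =>
              Real.sqrt (ρ (εs k) s x) * trv M (u (εs k) s x) i
              - Real.sqrt (Rm (s, x)) * trv M (Um (s, x)) i) ∂μx ∂μt)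
          + (ENNReal.ofReal (3 / Real.log (Real.exp 1 + M ^ 2))
              * (∫⁻ s, ∫⁻ x, ENNReal.ofReal (ρ (εs k) s x * Phi (u (εs k) s x)) ∂μx ∂μt)
            + ENNReal.ofReal (3 / Real.log (Real.exp 1 + M ^ 2))
              * (∫⁻ s, ∫⁻ x, ENNReal.ofReal (Rm (s, x) * Phi (Um (s, x))) ∂μx ∂μt)) := by
      intro k
      have hptw : ∀ᵐ s ∂μt, ∀ᵐ x ∂μx,
          ENNReal.ofReal (nsq fun i => Real.sqrt (ρ (εs k) s x) * u (εs k) s x i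
            - Real.sqrt (Rm (s, x)) * Um (s, x) i)
          ≤ ENNReal.ofReal 3 * ENNReal.ofReal (nsq fun i =>
              Real.sqrt (ρ (εs k) s x) * trv M (u (εs k) s x) i
              - Real.sqrt (Rm (s, x)) * trv M (Um (s, x)) i)
            + (ENNReal.ofReal (3 / Real.log (Real.exp 1 + M ^ 2))
                * ENNReal.ofReal (ρ (εs k) s x * Phi (u (εs k) s x))
              + ENNReal.ofReal (3 / Real.log (Real.exp 1 + M ^ 2))
                * ENNReal.ofReal (Rm (s, x) * Phi (Um (s, x)))) := by
        filter_upwards [ae_restrict_mem measurableSet_Ioc] with s hs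
        refine Filter.Eventually.of_forall fun x => ?_
        have hρe0 : 0 ≤ ρ (εs k) s x := (hpos _ (hεs k) s ⟨hs.1.le, hs.2⟩ x).le
        have hkB := keyB M (ρ (εs k) s x) (Rm (s, x)) (u (εs k) s x) (Um (s, x))
          hρe0 (Rm_nonneg _) hM0
        have nn1 : (0:ℝ) ≤ 3 * nsq (fun i => Real.sqrt (ρ (εs k) s x)
            * trv M (u (εs k) s x) i - Real.sqrt (Rm (s, x)) * trv M (Um (s, x)) i) :=
          mul_nonneg (by norm_num) (nsq_nonneg _)
        have nn2 : (0:ℝ) ≤ 3 / Real.log (Real.exp 1 + M ^ 2)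
            * (ρ (εs k) s x * Phi (u (εs k) s x)) :=
          mul_nonneg (div_nonneg (by norm_num) hLpos.le)
            (mul_nonneg hρe0 (Phi_nonneg _))
        have nn3 : (0:ℝ) ≤ 3 / Real.log (Real.exp 1 + M ^ 2)
            * (Rm (s, x) * Phi (Um (s, x))) :=
          mul_nonneg (div_nonneg (by norm_num) hLpos.le)
            (mul_nonneg (Rm_nonneg _) (Phi_nonneg _))
        calc ENNReal.ofReal (nsq fun i => Real.sqrt (ρ (εs k) s x) * u (εs k) s x i
            - Real.sqrt (Rm (s, x)) * Um (s, x) i)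
            ≤ ENNReal.ofReal (3 * nsq (fun i => Real.sqrt (ρ (εs k) s x)
                * trv M (u (εs k) s x) i - Real.sqrt (Rm (s, x)) * trv M (Um (s, x)) i)
              + 3 / Real.log (Real.exp 1 + M ^ 2) * (ρ (εs k) s x * Phi (u (εs k) s x))
              + 3 / Real.log (Real.exp 1 + M ^ 2) * (Rm (s, x) * Phi (Um (s, x)))) :=
              ENNReal.ofReal_le_ofReal hkB
          _ = _ := by
              rw [ENNReal.ofReal_add (add_nonneg nn1 nn2) nn3,
                ENNReal.ofReal_add nn1 nn2,
                ENNReal.ofReal_mul (by norm_num : (0:ℝ) ≤ 3),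
                ENNReal.ofReal_mul (div_nonneg (by norm_num) hLpos.le),
                ENNReal.ofReal_mul (div_nonneg (by norm_num) hLpos.le),
                add_assoc]
      have e1 : (∫⁻ s, ∫⁻ x, (ENNReal.ofReal 3 * ENNReal.ofReal (nsq fun i =>
            Real.sqrt (ρ (εs k) s x) * trv M (u (εs k) s x) i
            - Real.sqrt (Rm (s, x)) * trv M (Um (s, x)) i)
          + (ENNReal.ofReal (3 / Real.log (Real.exp 1 + M ^ 2))
              * ENNReal.ofReal (ρ (εs k) s x * Phi (u (εs k) s x))
            + ENNReal.ofReal (3 / Real.log (Real.exp 1 + M ^ 2))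
              * ENNReal.ofReal (Rm (s, x) * Phi (Um (s, x))))) ∂μx ∂μt)
          = (∫⁻ s, ∫⁻ x, (ENNReal.ofReal 3 * ENNReal.ofReal (nsq fun i =>
              Real.sqrt (ρ (εs k) s x) * trv M (u (εs k) s x) i
              - Real.sqrt (Rm (s, x)) * trv M (Um (s, x)) i)) ∂μx ∂μt)
            + ∫⁻ s, ∫⁻ x, (ENNReal.ofReal (3 / Real.log (Real.exp 1 + M ^ 2))
                * ENNReal.ofReal (ρ (εs k) s x * Phi (u (εs k) s x))
              + ENNReal.ofReal (3 / Real.log (Real.exp 1 + M ^ 2))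
                * ENNReal.ofReal (Rm (s, x) * Phi (Um (s, x)))) ∂μx ∂μt :=
        I2_add μt μx
          (f := fun p => ENNReal.ofReal 3 * ENNReal.ofReal (nsq fun i =>
            Real.sqrt (ρ (εs k) p.1 p.2) * trv M (u (εs k) p.1 p.2) i
            - Real.sqrt (Rm p) * trv M (Um p) i))
          (g := fun p => ENNReal.ofReal (3 / Real.log (Real.exp 1 + M ^ 2))
              * ENNReal.ofReal (ρ (εs k) p.1 p.2 * Phi (u (εs k) p.1 p.2))
            + ENNReal.ofReal (3 / Real.log (Real.exp 1 + M ^ 2))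
              * ENNReal.ofReal (Rm p * Phi (Um p)))
          (measurable_const.mul (mMM M hM0 k))
          ((measurable_const.mul (mPE k)).add (measurable_const.mul mPLm))
      have e2 : (∫⁻ s, ∫⁻ x, (ENNReal.ofReal (3 / Real.log (Real.exp 1 + M ^ 2))
              * ENNReal.ofReal (ρ (εs k) s x * Phi (u (εs k) s x))
            + ENNReal.ofReal (3 / Real.log (Real.exp 1 + M ^ 2))
              * ENNReal.ofReal (Rm (s, x) * Phi (Um (s, x)))) ∂μx ∂μt)
          = (∫⁻ s, ∫⁻ x, (ENNReal.ofReal (3 / Real.log (Real.exp 1 + M ^ 2))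
              * ENNReal.ofReal (ρ (εs k) s x * Phi (u (εs k) s x))) ∂μx ∂μt)
            + ∫⁻ s, ∫⁻ x, (ENNReal.ofReal (3 / Real.log (Real.exp 1 + M ^ 2))
              * ENNReal.ofReal (Rm (s, x) * Phi (Um (s, x)))) ∂μx ∂μt :=
        I2_add μt μx
          (f := fun p => ENNReal.ofReal (3 / Real.log (Real.exp 1 + M ^ 2))
            * ENNReal.ofReal (ρ (εs k) p.1 p.2 * Phi (u (εs k) p.1 p.2)))
          (g := fun p => ENNReal.ofReal (3 / Real.log (Real.exp 1 + M ^ 2))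
            * ENNReal.ofReal (Rm p * Phi (Um p)))
          (measurable_const.mul (mPE k)) (measurable_const.mul mPLm)
      have e3 : (∫⁻ s, ∫⁻ x, (ENNReal.ofReal 3 * ENNReal.ofReal (nsq fun i =>
            Real.sqrt (ρ (εs k) s x) * trv M (u (εs k) s x) i
            - Real.sqrt (Rm (s, x)) * trv M (Um (s, x)) i)) ∂μx ∂μt)
          = ENNReal.ofReal 3 * ∫⁻ s, ∫⁻ x, ENNReal.ofReal (nsq fun i =>
            Real.sqrt (ρ (εs k) s x) * trv M (u (εs k) s x) i
            - Real.sqrt (Rm (s, x)) * trv M (Um (s, x)) i) ∂μx ∂μt :=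
        I2_cmul μt μx (f := fun p => ENNReal.ofReal (nsq fun i =>
            Real.sqrt (ρ (εs k) p.1 p.2) * trv M (u (εs k) p.1 p.2) i
            - Real.sqrt (Rm p) * trv M (Um p) i)) (mMM M hM0 k) _
      have e4 : (∫⁻ s, ∫⁻ x, (ENNReal.ofReal (3 / Real.log (Real.exp 1 + M ^ 2))
            * ENNReal.ofReal (ρ (εs k) s x * Phi (u (εs k) s x))) ∂μx ∂μt)
          = ENNReal.ofReal (3 / Real.log (Real.exp 1 + M ^ 2))
            * ∫⁻ s, ∫⁻ x, ENNReal.ofReal (ρ (εs k) s x * Phi (u (εs k) s x)) ∂μx ∂μt :=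
        I2_cmul μt μx (f := fun p =>
          ENNReal.ofReal (ρ (εs k) p.1 p.2 * Phi (u (εs k) p.1 p.2))) (mPE k) _
      have e5 : (∫⁻ s, ∫⁻ x, (ENNReal.ofReal (3 / Real.log (Real.exp 1 + M ^ 2))
            * ENNReal.ofReal (Rm (s, x) * Phi (Um (s, x)))) ∂μx ∂μt)
          = ENNReal.ofReal (3 / Real.log (Real.exp 1 + M ^ 2))
            * ∫⁻ s, ∫⁻ x, ENNReal.ofReal (Rm (s, x) * Phi (Um (s, x))) ∂μx ∂μt :=
        I2_cmul μt μx (f := fun p => ENNReal.ofReal (Rm p * Phi (Um p))) mPLm _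
      calc (∫⁻ s, ∫⁻ x, ENNReal.ofReal (nsq fun i => Real.sqrt (ρ (εs k) s x)
            * u (εs k) s x i - Real.sqrt (Rm (s, x)) * Um (s, x) i) ∂μx ∂μt)
          ≤ ∫⁻ s, ∫⁻ x, (ENNReal.ofReal 3 * ENNReal.ofReal (nsq fun i =>
              Real.sqrt (ρ (εs k) s x) * trv M (u (εs k) s x) i
              - Real.sqrt (Rm (s, x)) * trv M (Um (s, x)) i)
            + (ENNReal.ofReal (3 / Real.log (Real.exp 1 + M ^ 2))
                * ENNReal.ofReal (ρ (εs k) s x * Phi (u (εs k) s x))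
              + ENNReal.ofReal (3 / Real.log (Real.exp 1 + M ^ 2))
                * ENNReal.ofReal (Rm (s, x) * Phi (Um (s, x))))) ∂μx ∂μt :=
            I2_mono_ae μt μx
              (f := fun p => ENNReal.ofReal (nsq fun i => Real.sqrt (ρ (εs k) p.1 p.2)
                * u (εs k) p.1 p.2 i - Real.sqrt (Rm p) * Um p i))
              (g := fun p => ENNReal.ofReal 3 * ENNReal.ofReal (nsq fun i =>
                  Real.sqrt (ρ (εs k) p.1 p.2) * trv M (u (εs k) p.1 p.2) i
                  - Real.sqrt (Rm p) * trv M (Um p) i)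
                + (ENNReal.ofReal (3 / Real.log (Real.exp 1 + M ^ 2))
                    * ENNReal.ofReal (ρ (εs k) p.1 p.2 * Phi (u (εs k) p.1 p.2))
                  + ENNReal.ofReal (3 / Real.log (Real.exp 1 + M ^ 2))
                    * ENNReal.ofReal (Rm p * Phi (Um p)))) hptw
        _ = _ := by rw [e1, e2, e3, e4, e5]
    -- conclude
    have hGtend : Filter.Tendsto (fun k => ENNReal.ofReal 3 * (∫⁻ s, ∫⁻ x,
        ENNReal.ofReal (nsq fun i => Real.sqrt (ρ (εs k) s x) * trv M (u (εs k) s x) i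
          - Real.sqrt (Rm (s, x)) * trv M (Um (s, x)) i) ∂μx ∂μt)) atTop (𝓝 0) := by
      have h4 := ENNReal.Tendsto.const_mul (a := ENNReal.ofReal 3) (hGk M hM0)
        (Or.inr (ENNReal.ofReal_ne_top (r := 3)))
      simpa using h4
    have hGev := (ENNReal.tendsto_nhds_zero.1 hGtend) (ε' / 2) (ENNReal.half_pos hε'.ne')
    filter_upwards [hGev] with k hk
    calc (∫⁻ s, ∫⁻ x, ENNReal.ofReal (nsq fun i => Real.sqrt (ρ (εs k) s x)
          * u (εs k) s x i - Real.sqrt (Rm (s, x)) * Um (s, x) i) ∂μx ∂μt)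
        ≤ ENNReal.ofReal 3 * (∫⁻ s, ∫⁻ x, ENNReal.ofReal (nsq fun i =>
              Real.sqrt (ρ (εs k) s x) * trv M (u (εs k) s x) i
              - Real.sqrt (Rm (s, x)) * trv M (Um (s, x)) i) ∂μx ∂μt)
          + (ENNReal.ofReal (3 / Real.log (Real.exp 1 + M ^ 2))
              * (∫⁻ s, ∫⁻ x, ENNReal.ofReal (ρ (εs k) s x * Phi (u (εs k) s x)) ∂μx ∂μt)
            + ENNReal.ofReal (3 / Real.log (Real.exp 1 + M ^ 2))
              * (∫⁻ s, ∫⁻ x, ENNReal.ofReal (Rm (s, x) * Phi (Um (s, x))) ∂μx ∂μt)) := key k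
      _ ≤ ε' / 2 + (ε' / 2 / 2 + ε' / 2 / 2) :=
          add_le_add hk (add_le_add
            (le_trans (mul_le_mul_right (TailE k) _) hcKC)
            (le_trans (mul_le_mul_right TailL _) hcKC))
      _ = ε' := by rw [ENNReal.add_halves, ENNReal.add_halves]
  -- conclusion
  have mDDre : ∀ k, Measurable fun p : ℝ × (Fin 3 → ℝ) =>
      nsq fun i => Real.sqrt (ρ (εs k) p.1 p.2) * u (εs k) p.1 p.2 i
        - Real.sqrt (Rm p) * Um p i := by
    intro k
    apply mnsq
    apply measurable_pi_lambda
    intro i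
    apply Measurable.sub
    · exact (Real.continuous_sqrt.measurable.comp (contρ k).measurable).mul
        ((measurable_pi_apply i).comp (contu k).measurable)
    · exact (Real.continuous_sqrt.measurable.comp mRm).mul
        ((measurable_pi_apply i).comp mUm)
  refine ⟨id, strictMono_id, ?_, ⟨C, ?_⟩⟩
  · -- strong L² convergence
    simp only [id_eq]
    have hAinner : ∀ k, ∀ᵐ s ∂μt,
        (∫ x in Q 3, nsq fun i => Real.sqrt (ρ (εs k) s x) * u (εs k) s x i
          - Real.sqrt (ρl s x) * ul s x i)
        = (∫⁻ x, ENNReal.ofReal (nsq fun i => Real.sqrt (ρ (εs k) s x) * u (εs k) s x i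
            - Real.sqrt (Rm (s, x)) * Um (s, x) i) ∂μx).toReal := by
      intro k
      filter_upwards [Hae] with s hs
      have e1 : (∫ x in Q 3, nsq fun i => Real.sqrt (ρ (εs k) s x) * u (εs k) s x i
          - Real.sqrt (ρl s x) * ul s x i)
          = ∫ x, (fun x => nsq fun i => Real.sqrt (ρ (εs k) s x) * u (εs k) s x i
            - Real.sqrt (Rm (s, x)) * Um (s, x) i) x ∂μx := by
        apply integral_congr_ae
        filter_upwards [hs.2] with x hx
        congr 1
        funext i
        rw [hx.2.1, hx.2.2.1 i]
      rw [e1, integral_eq_lintegral_of_nonneg_ae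
        (Filter.Eventually.of_forall fun x => nsq_nonneg _)
        ((mDDre k).comp measurable_prodMk_left).aestronglyMeasurable]
    rw [Metric.tendsto_atTop]
    intro δ hδ
    have hev := (ENNReal.tendsto_nhds_zero.1 hLk) (ENNReal.ofReal (δ / 2))
      (ENNReal.ofReal_pos.2 (by linarith))
    rw [Filter.eventually_atTop] at hev
    obtain ⟨N, hN⟩ := hev
    refine ⟨N, fun k hk => ?_⟩
    have hAe : (∫ s in (0:ℝ)..T, ∫ x in Q 3,
        nsq fun i => Real.sqrt (ρ (εs k) s x) * u (εs k) s x i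
          - Real.sqrt (ρl s x) * ul s x i)
        = ∫ s, (fun s => (∫⁻ x, ENNReal.ofReal (nsq fun i =>
            Real.sqrt (ρ (εs k) s x) * u (εs k) s x i
            - Real.sqrt (Rm (s, x)) * Um (s, x) i) ∂μx).toReal) s ∂μt := by
      rw [intervalIntegral.integral_of_le hT.le]
      exact integral_congr_ae (hAinner k)
    have hA0 : 0 ≤ ∫ s in (0:ℝ)..T, ∫ x in Q 3,
        nsq fun i => Real.sqrt (ρ (εs k) s x) * u (εs k) s x i
          - Real.sqrt (ρl s x) * ul s x i := by
      rw [hAe]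
      exact integral_nonneg fun s => ENNReal.toReal_nonneg
    have hAle : ENNReal.ofReal (∫ s in (0:ℝ)..T, ∫ x in Q 3,
        nsq fun i => Real.sqrt (ρ (εs k) s x) * u (εs k) s x i
          - Real.sqrt (ρl s x) * ul s x i)
        ≤ ∫⁻ s, ∫⁻ x, ENNReal.ofReal (nsq fun i =>
            Real.sqrt (ρ (εs k) s x) * u (εs k) s x i
            - Real.sqrt (Rm (s, x)) * Um (s, x) i) ∂μx ∂μt := by
      rw [hAe]
      by_cases hint : Integrable (fun s => (∫⁻ x, ENNReal.ofReal (nsq fun i =>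
          Real.sqrt (ρ (εs k) s x) * u (εs k) s x i
          - Real.sqrt (Rm (s, x)) * Um (s, x) i) ∂μx).toReal) μt
      · rw [ofReal_integral_eq_lintegral_ofReal hint
          (Filter.Eventually.of_forall fun s => ENNReal.toReal_nonneg)]
        exact lintegral_mono fun s => ENNReal.ofReal_toReal_le
      · rw [integral_undef hint]
        simp
    have hfin : (∫ s in (0:ℝ)..T, ∫ x in Q 3,
        nsq fun i => Real.sqrt (ρ (εs k) s x) * u (εs k) s x i
          - Real.sqrt (ρl s x) * ul s x i) ≤ δ / 2 := by
      have h5 := le_trans hAle (hN k hk)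
      rwa [ENNReal.ofReal_le_ofReal_iff (by linarith)] at h5
    rw [Real.dist_eq, sub_zero, abs_of_nonneg hA0]
    linarith
  · -- uniform bound on the limit energy
    have hfin2 : ∀ᵐ s ∂μt, (∫⁻ x, ENNReal.ofReal (Rm (s, x) * nsq (Um (s, x))) ∂μx)
        ≤ ENNReal.ofReal C := by
      filter_upwards [Hae] with s hs
      have hsIcc : s ∈ Set.Icc (0:ℝ) T := ⟨hs.1.1.le, hs.1.2⟩
      have hptw : ∀ᵐ x ∂μx, ENNReal.ofReal (Rm (s, x) * nsq (Um (s, x)))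
          ≤ Filter.liminf (fun k =>
            ENNReal.ofReal (ρ (εs k) s x * nsq (u (εs k) s x))) atTop := by
        filter_upwards [hs.2] with x hx
        rcases lt_or_ge 0 (Rm (s, x)) with hr | hr
        · have h1 : Filter.Tendsto (fun k => ρ (εs k) s x * nsq (u (εs k) s x)) atTop
              (𝓝 (Rm (s, x) * nsq (Um (s, x)))) :=
            hx.1.mul ((continuous_nsq.tendsto _).comp (hx.2.2.2 hr))
          exact le_of_eq ((ENNReal.tendsto_ofReal h1).liminf_eq).symm
        · have h0 : Rm (s, x) = 0 := le_antisymm hr (Rm_nonneg _)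
          simp [h0]
      calc (∫⁻ x, ENNReal.ofReal (Rm (s, x) * nsq (Um (s, x))) ∂μx)
          ≤ ∫⁻ x, Filter.liminf (fun k =>
              ENNReal.ofReal (ρ (εs k) s x * nsq (u (εs k) s x))) atTop ∂μx :=
            lintegral_mono_ae hptw
        _ ≤ Filter.liminf (fun k => ∫⁻ x,
              ENNReal.ofReal (ρ (εs k) s x * nsq (u (εs k) s x)) ∂μx) atTop :=
            lintegral_liminf_le fun k =>
              (((contρs k s).mul (continuous_nsq.comp (contus k s))).measurable).ennreal_ofReal
        _ ≤ ENNReal.ofReal C := by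
            have h1 := Filter.liminf_le_liminf
              (Filter.Eventually.of_forall fun k => lE1 k s hsIcc) (f := atTop (α := ℕ))
            simpa [Filter.liminf_const] using h1
    filter_upwards [Hae, hfin2] with s hs hfinC
    have e1 : (∫ x in Q 3, ρl s x * nsq (ul s x))
        = ∫ x, (fun x => Rm (s, x) * nsq (Um (s, x))) x ∂μx := by
      apply integral_congr_ae
      filter_upwards [hs.2] with x hx
      rw [hx.2.1, show ul s x = Um (s, x) from funext hx.2.2.1]
    rw [e1, integral_eq_lintegral_of_nonneg_ae
      (Filter.Eventually.of_forall fun x => mul_nonneg (Rm_nonneg _) (nsq_nonneg _))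
      ((mRm.mul (mnsq _ mUm)).comp measurable_prodMk_left).aestronglyMeasurable]
    calc (∫⁻ x, ENNReal.ofReal (Rm (s, x) * nsq (Um (s, x))) ∂μx).toReal
        ≤ (ENNReal.ofReal C).toReal := ENNReal.toReal_mono ENNReal.ofReal_ne_top hfinC
      _ = C := ENNReal.toReal_ofReal hC.le
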